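/- arXiv:math/0005232 — 6 statements merged into one kernel-verified Lean document; each statement's English description precedes it below -/
import Mathlib

section
/- Let Λ be a discrete additive subgroup (lattice) of ℂ², let p₁,…,p_m ∈ ℂ², and let Λ₀ = ⋃_{j=1}^m (Λ + p_j). Then there exists an invertible complex-linear transformation A : ℂ² → ℂ² such that the set {Im π¹(A p) : p ∈ Λ₀} is a discrete subset of ℝ; moreover A can be chosen so that whenever p, q ∈ A(Λ₀) with p ≠ q one has ‖p − q‖ ≥ 1 and either Im π¹(p) = Im π¹(q) or |Im π¹(p) − Im π¹(q)| ≥ 1. -/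
/-!
A discrete subgroup `Λ` of a finite-dimensional real space is a full lattice in its real span, so a
coordinate of a `ℤ`-basis, extended to the whole space, is a nonzero real functional `ℓ` that is
integer-valued on `Λ`. Hence `Λ₀ - Λ₀` lies in finitely many translates of `Λ` and `ℓ(Λ₀)` in
finitely many translates of `ℤ`; a finite union of translates of a discrete subgroup is closed and
discrete, so `Λ₀` and `ℓ(Λ₀)` are uniformly separated. Every nonzero real functional on `ℂ²` is the
imaginary part of the first coordinate of a complex-linear automorphism, and a large real multiple
of that automorphism stretches both separations to at least `1`.
-/

open Filter Topology Module

section Separation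

theorem AddSubgroup.isClosed_and_isDiscrete_iUnion_image_add_right {G : Type*} [AddGroup G]
    [TopologicalSpace G] [IsTopologicalAddGroup G] [T2Space G] (Λ : AddSubgroup G)
    [DiscreteTopology Λ] {ι : Type*} [Finite ι] (p : ι → G) :
    IsClosed (⋃ j, (· + p j) '' (Λ : Set G)) ∧ IsDiscrete (⋃ j, (· + p j) '' (Λ : Set G)) := by
  have hclosed (j : ι) : IsClosed ((· + p j) '' (Λ : Set G)) :=
    (Homeomorph.addRight (p j)).isClosedMap _ AddSubgroup.isClosed_of_discrete
  have hdiscrete (j : ι) : IsDiscrete ((· + p j) '' (Λ : Set G)) :=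
    DiscreteTopology.isDiscrete.image (Homeomorph.addRight (p j)).isInducing
  exact ⟨isClosed_iUnion_of_finite hclosed, IsDiscrete.iUnion hdiscrete hclosed⟩

theorem exists_pos_le_norm_of_isClosed_of_isDiscrete {G : Type*} [SeminormedAddGroup G]
    {D : Set G} (hc : IsClosed D) (hd : IsDiscrete D) :
    ∃ ε > 0, ∀ d ∈ D, d ≠ 0 → ε ≤ ‖d‖ := by
  have hD : Dᶜ ∈ 𝓝[≠] (0 : G) :=
    disjoint_principal_right.mp (isClosed_and_discrete_iff.mp ⟨hc, hd⟩ 0)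
  obtain ⟨ε, hε, hball⟩ := Metric.mem_nhdsWithin_iff.mp hD
  exact ⟨ε, hε, fun d hd hd0 ↦ not_lt.mp fun hlt ↦ hball ⟨by simpa using hlt, hd0⟩ hd⟩

variable {G : Type*} [NormedAddCommGroup G] {ι : Type*} [Finite ι]

theorem AddSubgroup.exists_pos_le_norm_sub_of_mem_iUnion (Λ : AddSubgroup G)
    [DiscreteTopology Λ] (p : ι → G) :
    ∃ ε > 0, ∀ x ∈ ⋃ j, (· + p j) '' (Λ : Set G), ∀ y ∈ ⋃ j, (· + p j) '' (Λ : Set G),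
      x ≠ y → ε ≤ ‖x - y‖ := by
  obtain ⟨hc, hd⟩ :=
    Λ.isClosed_and_isDiscrete_iUnion_image_add_right fun ij : ι × ι ↦ p ij.1 - p ij.2
  obtain ⟨ε, hε, hε_le⟩ := exists_pos_le_norm_of_isClosed_of_isDiscrete hc hd
  refine ⟨ε, hε, ?_⟩
  simp only [Set.mem_iUnion, Set.mem_image]
  rintro _ ⟨i, a, ha, rfl⟩ _ ⟨j, b, hb, rfl⟩ hne
  refine hε_le _ ?_ (sub_ne_zero.mpr hne)
  exact Set.mem_iUnion.mpr ⟨(i, j), a - b, Λ.sub_mem ha hb, show a - b + (p i - p j) = _ by abel⟩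

theorem AddSubgroup.exists_pos_le_norm_map_sub_of_mem_iUnion {H : Type*} [NormedAddCommGroup H]
    (Λ : AddSubgroup G) {M : AddSubgroup H} [DiscreteTopology M] (φ : G →+ H)
    (hφ : Λ.map φ ≤ M) (p : ι → G) :
    ∃ δ > 0, ∀ x ∈ ⋃ j, (· + p j) '' (Λ : Set G), ∀ y ∈ ⋃ j, (· + p j) '' (Λ : Set G),
      φ x ≠ φ y → δ ≤ ‖φ x - φ y‖ := by
  obtain ⟨δ, hδ, hsep⟩ := M.exists_pos_le_norm_sub_of_mem_iUnion (φ ∘ p)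
  have hmaps : Set.MapsTo φ (⋃ j, (· + p j) '' (Λ : Set G))
      (⋃ j, (· + φ (p j)) '' (M : Set H)) := by
    simp only [Set.MapsTo, Set.mem_iUnion, Set.mem_image]
    rintro _ ⟨j, a, ha, rfl⟩
    exact ⟨j, φ a, hφ ⟨a, ha, rfl⟩, (map_add φ a (p j)).symm⟩
  exact ⟨δ, hδ, fun x hx y hy ↦ hsep _ (hmaps hx) _ (hmaps hy)⟩

end Separation

section IntegralFunctional

variable {E : Type*} [NormedAddCommGroup E] [NormedSpace ℝ E] [FiniteDimensional ℝ E]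
  [Nontrivial E]

theorem IsZLattice.exists_dual_ne_zero_forall_mem_eq_intCast (L : Submodule ℤ E)
    [DiscreteTopology L] [IsZLattice ℝ L] :
    ∃ ℓ : Dual ℝ E, ℓ ≠ 0 ∧ ∀ x ∈ L, ∃ n : ℤ, ℓ x = n := by
  let b₀ := Free.chooseBasis ℤ L
  let b := b₀.ofZLatticeBasis ℝ L
  obtain ⟨i⟩ := b.index_nonempty
  refine ⟨b.coord i, fun h ↦ by simpa using LinearMap.congr_fun h (b i), fun x hx ↦ ?_⟩
  exact ⟨b₀.repr ⟨x, hx⟩ i, b₀.ofZLatticeBasis_repr_apply ℝ L ⟨x, hx⟩ i⟩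

theorem AddSubgroup.exists_dual_ne_zero_forall_mem_eq_intCast (Λ : AddSubgroup E)
    [DiscreteTopology Λ] :
    ∃ ℓ : Dual ℝ E, ℓ ≠ 0 ∧ ∀ x ∈ Λ, ∃ n : ℤ, ℓ x = n := by
  let F := Submodule.span ℝ (Λ : Set E)
  by_cases hF : F = ⊥
  · obtain ⟨ℓ, hℓ⟩ := exists_ne (0 : Dual ℝ E)
    refine ⟨ℓ, hℓ, fun x hx ↦ ⟨0, ?_⟩⟩
    have hx0 : x = 0 := by simpa [F, hF] using (Submodule.subset_span hx : x ∈ F)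
    simp [hx0]
  have : Nontrivial F := Submodule.nontrivial_iff_ne_bot.mpr hF
  let L : Submodule ℤ F := Λ.toIntSubmodule.comap (F.subtype.restrictScalars ℤ)
  have : DiscreteTopology L :=
    DiscreteTopology.preimage_of_continuous_injective (Λ : Set E) continuous_subtype_val
      Subtype.val_injective
  have : IsZLattice ℝ L := ⟨Submodule.span_span_coe_preimage⟩
  obtain ⟨ℓ₀, hℓ₀, hint⟩ := IsZLattice.exists_dual_ne_zero_forall_mem_eq_intCast L
  obtain ⟨ℓ, rfl⟩ := LinearMap.exists_extend ℓ₀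
  exact ⟨ℓ, fun h ↦ hℓ₀ (by simp [h]), fun x hx ↦ hint ⟨x, Submodule.subset_span hx⟩ hx⟩

end IntegralFunctional

theorem Module.Dual.exists_linearEquiv_fst_eq {K W : Type*} [Field K] [AddCommGroup W]
    [Module K W] [FiniteDimensional K W] {f : Dual K (K × W)} (hf : f ≠ 0) :
    ∃ e : (K × W) ≃ₗ[K] K × W, ∀ z, (e z).1 = f z := by
  obtain ⟨q, hq⟩ := (LinearMap.ker f).exists_isCompl
  have hrank : finrank K (LinearMap.ker f) = finrank K W := by
    have := finrank_ker_add_one_of_ne_zero hf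
    rw [finrank_prod, finrank_self] at this
    omega
  let e₁ := LinearMap.equivProdOfSurjectiveOfIsCompl f ((LinearMap.ker f).projectionOnto q hq)
    (range_eq_top_of_ne_zero hf) (Submodule.range_projectionOnto hq)
    (by rwa [Submodule.ker_projectionOnto])
  exact ⟨e₁.trans ((LinearEquiv.refl K K).prodCongr (LinearEquiv.ofFinrankEq _ _ hrank)),
    fun z ↦ rfl⟩

theorem Module.Dual.exists_continuousLinearEquiv_im_fst_eq {W : Type*} [NormedAddCommGroup W]
    [NormedSpace ℂ W] [FiniteDimensional ℂ W] {ℓ : Dual ℝ (ℂ × W)} (hℓ : ℓ ≠ 0) :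
    ∃ e : (ℂ × W) ≃L[ℂ] ℂ × W, ∀ z, (e z).1.im = ℓ z := by
  let f : Dual ℂ (ℂ × W) := Complex.I • ℓ.extendRCLike
  have hf (z : ℂ × W) : (f z).im = ℓ z := by
    simp only [f, LinearMap.smul_apply, smul_eq_mul, Complex.I_mul_im]
    exact ℓ.re_extendRCLike_apply (𝕜 := ℂ) z
  have hf0 : f ≠ 0 := fun h ↦ hℓ (LinearMap.ext fun z ↦ by simp [← hf, h])
  obtain ⟨e, he⟩ := exists_linearEquiv_fst_eq hf0
  exact ⟨e.toContinuousLinearEquiv, fun z ↦ by simp [he, hf]⟩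

theorem Module.Dual.exists_continuousLinearEquiv_one_le_norm_sub {W : Type*}
    [NormedAddCommGroup W] [NormedSpace ℂ W] [FiniteDimensional ℂ W] {S : Set (ℂ × W)}
    {ℓ : Dual ℝ (ℂ × W)} (hℓ : ℓ ≠ 0) {ε δ : ℝ} (hε : 0 < ε) (hδ : 0 < δ)
    (hS : ∀ x ∈ S, ∀ y ∈ S, x ≠ y → ε ≤ ‖x - y‖)
    (hℓS : ∀ x ∈ S, ∀ y ∈ S, ℓ x ≠ ℓ y → δ ≤ |ℓ x - ℓ y|) :
    ∃ A : (ℂ × W) ≃L[ℂ] ℂ × W, ∀ x ∈ S, ∀ y ∈ S, x ≠ y →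
      1 ≤ ‖A x - A y‖ ∧ ((A x).1.im = (A y).1.im ∨ 1 ≤ |(A x).1.im - (A y).1.im|) := by
  obtain ⟨e, he⟩ := exists_continuousLinearEquiv_im_fst_eq hℓ
  set K := ‖(e.symm : (ℂ × W) →L[ℂ] ℂ × W)‖
  set c : ℝ := max (K / ε) (1 / δ)
  have hc : 0 < c := lt_max_of_lt_right (by positivity)
  let A := e.trans (ContinuousLinearEquiv.smulLeft (Units.mk0 (c : ℂ) (by exact_mod_cast hc.ne')))
  have hA_sub (x y : ℂ × W) : A x - A y = (c : ℂ) • (e x - e y) := by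
    simp [A, smul_sub]
  have hA_im (x : ℂ × W) : (A x).1.im = c * ℓ x := by
    simp [A, he]
  refine ⟨A, fun x hx y hy hxy ↦ ⟨?_, ?_⟩⟩
  · have hK : ‖x - y‖ ≤ K * ‖e x - e y‖ := by
      simpa [dist_eq_norm] using e.antilipschitz.le_mul_dist x y
    have hle : 1 ≤ K / ε * ‖e x - e y‖ := by
      rw [div_mul_eq_mul_div, le_div_iff₀ hε]
      linarith [hS x hx y hy hxy]
    rw [hA_sub, norm_smul, Complex.norm_real, Real.norm_of_nonneg hc.le]
    exact hle.trans (mul_le_mul_of_nonneg_right (le_max_left _ _) (norm_nonneg _))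
  · rw [hA_im, hA_im, ← mul_sub, abs_mul, abs_of_pos hc]
    by_cases h : ℓ x = ℓ y
    · simp [h]
    · right
      calc (1 : ℝ) = 1 / δ * δ := by field_simp
        _ ≤ c * |ℓ x - ℓ y| :=
          mul_le_mul (le_max_right _ _) (hℓS x hx y hy h) hδ.le hc.le

/-- Let `Λ` be a discrete additive subgroup (lattice) of `ℂ²`, let
`p 1, …, p m ∈ ℂ²`, and let `Λ₀ = ⋃ j, (Λ + p j)`.  Then there exists an invertible
complex-linear transformation `A : ℂ² → ℂ²` such that `{Im π¹(A p) : p ∈ Λ₀}` is a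
discrete subset of `ℝ`; moreover `A` can be chosen so that whenever `p, q ∈ A(Λ₀)`
with `p ≠ q` one has `‖p − q‖ ≥ 1` and either `Im π¹(p) = Im π¹(q)` or
`|Im π¹(p) − Im π¹(q)| ≥ 1`. -/
theorem exists_linear_map_discrete_imaginary_parts
    (Λ : AddSubgroup (ℂ × ℂ)) (hΛ : DiscreteTopology Λ)
    (m : ℕ) (p : Fin m → ℂ × ℂ)
    (Λ₀ : Set (ℂ × ℂ))
    (hΛ₀ : Λ₀ = ⋃ j : Fin m, (fun q => q + p j) '' (Λ : Set (ℂ × ℂ))) :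
    ∃ A : (ℂ × ℂ) ≃L[ℂ] ℂ × ℂ,
      DiscreteTopology ((fun q : ℂ × ℂ => (A q).1.im) '' Λ₀) ∧
      ∀ x ∈ (A : (ℂ × ℂ) → ℂ × ℂ) '' Λ₀, ∀ y ∈ (A : (ℂ × ℂ) → ℂ × ℂ) '' Λ₀,
        x ≠ y →
          1 ≤ ‖x - y‖ ∧ (x.1.im = y.1.im ∨ 1 ≤ |x.1.im - y.1.im|) := by
  have : DiscreteTopology Λ := hΛ
  obtain ⟨ℓ, hℓ, hℓΛ⟩ := Λ.exists_dual_ne_zero_forall_mem_eq_intCast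
  have hℓ_map : Λ.map ℓ.toAddMonoidHom ≤ AddSubgroup.zmultiples 1 := by
    rintro _ ⟨x, hx, rfl⟩
    obtain ⟨n, hn⟩ := hℓΛ x hx
    exact ⟨n, by simp [hn]⟩
  obtain ⟨ε, hε, hS⟩ := Λ.exists_pos_le_norm_sub_of_mem_iUnion p
  obtain ⟨δ, hδ, hℓS⟩ := Λ.exists_pos_le_norm_map_sub_of_mem_iUnion _ hℓ_map p
  obtain ⟨A, hA⟩ := ℓ.exists_continuousLinearEquiv_one_le_norm_sub hℓ hε hδ hS hℓS
  subst hΛ₀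
  refine ⟨A, DiscreteTopology.of_forall_le_dist one_pos ?_, ?_⟩
  · rintro ⟨_, x, hx, rfl⟩ ⟨_, y, hy, rfl⟩ hne
    have hxy : x ≠ y := by rintro rfl; exact hne rfl
    rw [Subtype.dist_eq, Real.dist_eq]
    exact (hA x hx y hy hxy).2.resolve_left fun h ↦ hne (Subtype.ext h)
  · rintro _ ⟨x, hx, rfl⟩ _ ⟨y, hy, rfl⟩ hne
    exact hA x hx y hy (ne_of_apply_ne A hne)
end

section
/- Let Λ be a discrete additive subgroup (lattice) of ℂ², let p₁,…,p_m ∈ ℂ², and let Λ₀ = ⋃_{j=1}^m (Λ + p_j). Then there exist r > 0, a point v ∈ ℂ², and a nonzero direction d ∈ ℂ² such that the complex affine line {v + t·d : t ∈ ℂ} stays at distance at least r from Λ₀, i.e. ‖v + t·d − p‖ ≥ r for all t ∈ ℂ and all p ∈ Λ₀. In particular there is a nonconstant holomorphic map from ℂ to ℂ² whose image avoids an open neighborhood of Λ₀. -/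
open Module Submodule

lemma exists_int_functional (Λ : AddSubgroup (ℂ × ℂ)) (hΛ : DiscreteTopology Λ) :
    ∃ f : (ℂ × ℂ) →ₗ[ℝ] ℝ, f ≠ 0 ∧ ∀ x ∈ Λ, ∃ n : ℤ, f x = n := by
  by_cases hspan : Submodule.span ℝ (Λ : Set (ℂ × ℂ)) = ⊤
  · set L : Submodule ℤ (ℂ × ℂ) := AddSubgroup.toIntSubmodule Λ with hL
    have hLset : (L : Set (ℂ × ℂ)) = (Λ : Set (ℂ × ℂ)) := rfl
    have hdisc : DiscreteTopology L := hΛ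
    have hz : IsZLattice ℝ L := ⟨by rw [hLset]; exact hspan⟩
    have : Module.Finite ℤ L := ZLattice.module_finite ℝ L
    have : Module.Free ℤ L := ZLattice.module_free ℝ L
    let b := Module.Free.chooseBasis ℤ L
    let B := b.ofZLatticeBasis ℝ L
    have : Nonempty (Module.Free.ChooseBasisIndex ℤ L) := B.index_nonempty
    obtain ⟨i⟩ := this
    refine ⟨B.coord i, ?_, ?_⟩
    · intro h
      have h1 : B.coord i (B i) = 0 := by rw [h]; rfl
      rw [Basis.coord_apply, Basis.repr_self, Finsupp.single_eq_same] at h1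
      exact one_ne_zero h1
    · intro x hx
      refine ⟨b.repr ⟨x, hx⟩ i, ?_⟩
      have := b.ofZLatticeBasis_repr_apply ℝ (L := L) ⟨x, hx⟩ i
      rw [Basis.coord_apply]
      exact this
  · have hlt : Submodule.span ℝ (Λ : Set (ℂ × ℂ)) < ⊤ := lt_top_iff_ne_top.mpr hspan
    obtain ⟨f, hf0, hf⟩ := Submodule.exists_dual_map_eq_bot_of_lt_top hlt inferInstance
    refine ⟨f, hf0, fun x hx => ⟨0, ?_⟩⟩
    have : f x ∈ Submodule.map f (Submodule.span ℝ (Λ : Set (ℂ × ℂ))) :=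
      ⟨x, Submodule.subset_span hx, rfl⟩
    rw [hf] at this
    simpa using this

/-- Let `Λ` be a discrete additive subgroup (lattice) of `ℂ²`, let
`p 1, …, p m ∈ ℂ²`, and let `Λ₀ = ⋃ j, (Λ + p j)`.  Then there exist `r > 0`, a point
`v ∈ ℂ²` and a nonzero direction `d ∈ ℂ²` such that the complex affine line
`{v + t • d : t ∈ ℂ}` stays at distance at least `r` from `Λ₀`.  In particular, there
is a nonconstant holomorphic map from `ℂ` to `ℂ²` whose image avoids an open
neighborhood of `Λ₀`. -/
theorem exists_affine_line_avoiding_neighborhood_of_lattice_translates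
    (Λ : AddSubgroup (ℂ × ℂ)) (hΛ : DiscreteTopology Λ)
    (m : ℕ) (p : Fin m → ℂ × ℂ)
    (Λ₀ : Set (ℂ × ℂ))
    (hΛ₀ : Λ₀ = ⋃ j : Fin m, (fun q => q + p j) '' (Λ : Set (ℂ × ℂ))) :
    (∃ r > (0 : ℝ), ∃ v d : ℂ × ℂ, d ≠ 0 ∧
        ∀ t : ℂ, ∀ q ∈ Λ₀, r ≤ ‖v + t • d - q‖) ∧
    ∃ (h : ℂ → ℂ × ℂ) (U : Set (ℂ × ℂ)),
      IsOpen U ∧ Λ₀ ⊆ U ∧ Differentiable ℂ h ∧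
      (¬ ∃ c : ℂ × ℂ, ∀ t : ℂ, h t = c) ∧
      ∀ t : ℂ, h t ∉ U := by
  classical
  obtain ⟨f, hf0, hfint⟩ := exists_int_functional Λ hΛ
  -- the multiplication-by-I map, as an ℝ-linear map
  let mI : (ℂ × ℂ) →ₗ[ℝ] (ℂ × ℂ) :=
    { toFun := fun x => Complex.I • x
      map_add' := fun x y => smul_add _ x y
      map_smul' := fun r x => smul_comm Complex.I r x }
  let g : (ℂ × ℂ) →ₗ[ℝ] ℝ × ℝ := f.prod (f.comp mI)
  -- find a nonzero d in the kernel of g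
  have hker : LinearMap.ker g ≠ ⊥ := by
    intro hk
    have hinj := LinearMap.ker_eq_bot.mp hk
    have hle := LinearMap.finrank_le_finrank_of_injective hinj
    rw [Module.finrank_prod, Module.finrank_prod, Complex.finrank_real_complex,
      Module.finrank_self] at hle
    omega
  obtain ⟨d, hdmem, hd0⟩ := (Submodule.ne_bot_iff _).mp hker
  have hgd : g d = 0 := hdmem
  have hfd : f d = 0 := congrArg Prod.fst hgd
  have hfId : f (Complex.I • d) = 0 := congrArg Prod.snd hgd
  have key : ∀ t : ℂ, f (t • d) = 0 := by
    intro t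
    have hdecomp : t • d = t.re • d + t.im • (Complex.I • d) := by
      rw [← Complex.coe_smul t.re d, ← Complex.coe_smul t.im (Complex.I • d),
        smul_smul, ← add_smul]
      congr 1
      exact (Complex.re_add_im t).symm
    rw [hdecomp, map_add, map_smul, map_smul, hfd, hfId, smul_zero, smul_zero, add_zero]
  -- choose s avoiding the countable set of bad values
  set B : Set ℝ := ⋃ j : Fin m, Set.range (fun n : ℤ => f (p j) + n) with hB
  have hBc : B.Countable := Set.countable_iUnion fun j => Set.countable_range _
  have hBne : B ≠ Set.univ := by
    intro h
    exact Cardinal.not_countable_real (h ▸ hBc)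
  obtain ⟨s, hs⟩ := (Set.ne_univ_iff_exists_notMem B).mp hBne
  -- choose v with f v = s
  obtain ⟨x₀, hx₀⟩ : ∃ x, f x ≠ 0 := by
    by_contra h
    push_neg at h
    exact hf0 (LinearMap.ext fun x => h x)
  set v : ℂ × ℂ := (s / f x₀) • x₀ with hv
  have hfv : f v = s := by
    rw [hv, map_smul, smul_eq_mul, div_mul_cancel₀ _ hx₀]
  -- a uniform gap ε
  obtain ⟨ε, hε, hεle⟩ : ∃ ε > 0, ∀ (j : Fin m) (n : ℤ), ε ≤ |s - f (p j) - n| := by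
    rcases Nat.eq_zero_or_pos m with hm | hm
    · subst hm
      exact ⟨1, one_pos, fun j => j.elim0⟩
    · have hne : (Finset.univ : Finset (Fin m)).Nonempty := ⟨⟨0, hm⟩, Finset.mem_univ _⟩
      obtain ⟨j₀, -, hj₀⟩ := Finset.exists_min_image Finset.univ
        (fun j => Metric.infDist (s - f (p j)) (Set.range ((↑) : ℤ → ℝ))) hne
      refine ⟨Metric.infDist (s - f (p j₀)) (Set.range ((↑) : ℤ → ℝ)), ?_, ?_⟩
      · have hnm : s - f (p j₀) ∉ Set.range ((↑) : ℤ → ℝ) := by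
          rintro ⟨n, hn⟩
          exact hs (Set.mem_iUnion.mpr ⟨j₀, ⟨n, show f (p j₀) + (n:ℝ) = s by linarith⟩⟩)
        exact (Int.isClosedEmbedding_coe_real.isClosed_range.notMem_iff_infDist_pos
          ⟨(0 : ℝ), 0, by norm_num⟩).mp hnm
      · intro j n
        calc Metric.infDist (s - f (p j₀)) (Set.range ((↑) : ℤ → ℝ))
            ≤ Metric.infDist (s - f (p j)) (Set.range ((↑) : ℤ → ℝ)) :=
              hj₀ j (Finset.mem_univ j)
          _ ≤ dist (s - f (p j)) (n : ℝ) :=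
              Metric.infDist_le_dist_of_mem ⟨n, rfl⟩
          _ = |s - f (p j) - n| := by rw [Real.dist_eq]
  -- norm bound on f
  let F := LinearMap.toContinuousLinearMap f
  have hFapp : ∀ y, F y = f y := fun y => rfl
  have hFpos : 0 < ‖F‖ := by
    rw [norm_pos_iff]
    intro h
    apply hx₀
    rw [← hFapp, h, ContinuousLinearMap.zero_apply]
  set r : ℝ := ε / ‖F‖ with hr
  have hrpos : 0 < r := div_pos hε hFpos
  have hmain : ∀ t : ℂ, ∀ q ∈ Λ₀, r ≤ ‖v + t • d - q‖ := by
    intro t q hq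
    rw [hΛ₀] at hq
    rw [Set.mem_iUnion] at hq
    obtain ⟨j, hq⟩ := hq
    obtain ⟨x, hx, rfl⟩ := hq
    obtain ⟨n, hn⟩ := hfint x hx
    set y : ℂ × ℂ := v + t • d - (x + p j) with hy
    have hfy : f y = s - f (p j) - n := by
      rw [hy, map_sub, map_add, map_add, hfv, key t, hn]
      ring
    have h1 : ε ≤ |f y| := hfy ▸ hεle j n
    have h2 : |f y| ≤ ‖F‖ * ‖y‖ := by
      have := F.le_opNorm y
      rwa [hFapp, Real.norm_eq_abs] at this
    rw [hr, div_le_iff₀ hFpos]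
    calc ε ≤ ‖F‖ * ‖y‖ := le_trans h1 h2
      _ = ‖y‖ * ‖F‖ := mul_comm _ _
  refine ⟨⟨r, hrpos, v, d, hd0, hmain⟩, ?_⟩
  refine ⟨fun t => v + t • d, ⋃ q ∈ Λ₀, Metric.ball q (r / 2), ?_, ?_, ?_, ?_, ?_⟩
  · exact isOpen_biUnion fun q _ => Metric.isOpen_ball
  · intro q hq
    exact Set.mem_biUnion hq (Metric.mem_ball_self (by positivity))
  · exact (differentiable_const v).add (differentiable_id.smul_const d)
  · rintro ⟨c, hc⟩
    have h0 := hc 0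
    have h1 := hc 1
    simp only [zero_smul, add_zero, one_smul] at h0 h1
    exact hd0 (add_eq_left.mp (h1.trans h0.symm))
  · intro t ht
    obtain ⟨q, hq, hball⟩ := Set.mem_iUnion₂.mp ht
    have h1 : dist (v + t • d) q < r / 2 := Metric.mem_ball.mp hball
    have h2 : r ≤ dist (v + t • d) q := by
      rw [dist_eq_norm]
      exact hmain t q hq
    linarith
end

section
/- Let C > 0, let f : ℝ → [0, C] be measurable, and let ε ∈ (0,1). Then there exists a function g holomorphic on the strip S_ε with Re g(z) ≥ 0 for all z ∈ S_ε, such that for every δ > 0 and every z₀ = x₀ + i y₀ ∈ S_ε with the property that f(x) = f(x₀) for all x ∈ (x₀ − δ, x₀ + δ), one has |g(z₀) − f(x₀)| ≤ 2Cε/(πδ). -/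
/-!
The approximant is the Poisson integral of `f` at height `ε`, continued holomorphically in the
point of evaluation: `g z = ∫ f t * ε / (π (ε² + (z - t)²)) dt`. On the strip the kernel has
nonnegative real part and is dominated by a Cauchy density, so `g` is holomorphic with
`Re g ≥ 0`. The kernel integrates to `1` on the real line (it is the Cauchy density of scale
`ε`), hence on the whole strip by the identity theorem. So if `f` is constant on
`(x₀ - δ, x₀ + δ)`, then `g z₀ - f x₀` only sees the tail `|t - x₀| ≥ δ`, where the kernel is
at most `ε / (π (t - x₀)²)`, and `∫_{|s| ≥ δ} s⁻² ds = 2 / δ`.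
-/

open MeasureTheory Set Filter Topology Metric Real
open scoped NNReal

section HolomorphicParametricIntegral

variable {α : Type*} [MeasurableSpace α] {μ : Measure α} {E : Type*} [NormedAddCommGroup E]
  [NormedSpace ℂ E]

theorem aestronglyMeasurable_deriv_of_eventually {F : ℂ → α → E} {z₀ : ℂ}
    (hF_meas : ∀ᶠ z in 𝓝 z₀, AEStronglyMeasurable (F z) μ)
    (h_diff : ∀ᵐ a ∂μ, DifferentiableAt ℂ (F · a) z₀) :
    AEStronglyMeasurable (fun a ↦ deriv (F · a) z₀) μ := by
  have h_shift : ∀ᶠ h in 𝓝[≠] (0 : ℂ), AEStronglyMeasurable (F (z₀ + h)) μ :=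
    ((continuous_const_add z₀).tendsto' 0 z₀ (add_zero z₀)).eventually hF_meas
      |>.filter_mono nhdsWithin_le_nhds
  obtain ⟨h, h_lim, h_meas⟩ := exists_seq_forall_of_frequently h_shift.frequently
  refine aestronglyMeasurable_of_tendsto_ae atTop
    (f := fun n a ↦ (h n)⁻¹ • (F (z₀ + h n) a - F z₀ a))
    (fun n ↦ ((h_meas n).sub hF_meas.self_of_nhds).const_smul _) ?_
  filter_upwards [h_diff] with a ha
  exact ha.hasDerivAt.tendsto_slope_zero.comp h_lim

/-- The Cauchy estimates turn the domination of the integrand into a domination of its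
derivative, so holomorphic integrands need no separate bound on their derivatives. -/
theorem differentiableAt_integral_of_dominated {F : ℂ → α → E} {z₀ : ℂ} {U : Set ℂ}
    {bound : α → ℝ} (hU : U ∈ 𝓝 z₀) (hF_meas : ∀ z ∈ U, AEStronglyMeasurable (F z) μ)
    (h_diff : ∀ᵐ a ∂μ, DifferentiableOn ℂ (F · a) U)
    (h_bound : ∀ᵐ a ∂μ, ∀ z ∈ U, ‖F z a‖ ≤ bound a)
    (bound_integrable : Integrable bound μ) :
    DifferentiableAt ℂ (fun z ↦ ∫ a, F z a ∂μ) z₀ := by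
  obtain ⟨R, hR, hRU⟩ := Metric.mem_nhds_iff.1 hU
  set r := R / 2 with hr_def
  have hr : 0 < r := half_pos hR
  have h_nhds : ∀ z ∈ ball z₀ r, U ∈ 𝓝 z := fun z hz ↦
    mem_of_superset (isOpen_ball.mem_nhds (ball_subset_ball (half_le_self hR.le) hz)) hRU
  have h_closedBall : ∀ z ∈ ball z₀ r, closedBall z r ⊆ U := fun z hz ↦
    (closedBall_subset_ball' (by rw [mem_ball] at hz; linarith)).trans hRU
  have h_hasDeriv : ∀ᵐ a ∂μ, ∀ z ∈ ball z₀ r, HasDerivAt (F · a) (deriv (F · a) z) z := by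
    filter_upwards [h_diff] with a ha z hz
    exact (ha.differentiableAt (h_nhds z hz)).hasDerivAt
  have h_deriv_bound : ∀ᵐ a ∂μ, ∀ z ∈ ball z₀ r, ‖deriv (F · a) z‖ ≤ bound a / r := by
    filter_upwards [h_diff, h_bound] with a hda hba z hz
    exact Complex.norm_deriv_le_of_forall_mem_sphere_norm_le hr
      (hda.diffContOnCl_ball (h_closedBall z hz))
      fun w hw ↦ hba w (h_closedBall z hz (sphere_subset_closedBall hw))
  have hF_meas' : ∀ᶠ z in 𝓝 z₀, AEStronglyMeasurable (F z) μ := eventually_of_mem hU hF_meas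
  have hF_int : Integrable (F z₀) μ := bound_integrable.mono' hF_meas'.self_of_nhds
    (h_bound.mono fun a ha ↦ ha z₀ (mem_of_mem_nhds hU))
  have hF'_meas : AEStronglyMeasurable (fun a ↦ deriv (F · a) z₀) μ :=
    aestronglyMeasurable_deriv_of_eventually hF_meas'
      (h_hasDeriv.mono fun a ha ↦ (ha z₀ (mem_ball_self hr)).differentiableAt)
  exact (hasDerivAt_integral_of_dominated_loc_of_deriv_le (ball_mem_nhds z₀ hr) hF_meas'
    hF_int hF'_meas h_deriv_bound (bound_integrable.div_const r) h_hasDeriv).2.differentiableAt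

end HolomorphicParametricIntegral

theorem AnalyticOnNhd.eqOn_of_preconnected_of_eq_ofReal {E : Type*} [NormedAddCommGroup E]
    [NormedSpace ℂ E] {f g : ℂ → E} {U : Set ℂ} (hf : AnalyticOnNhd ℂ f U)
    (hg : AnalyticOnNhd ℂ g U) (hU : IsPreconnected U) {x₀ : ℝ} (hx₀ : (x₀ : ℂ) ∈ U)
    (hfg : ∀ x : ℝ, f x = g x) : EqOn f g U := by
  have h_ofReal : Tendsto ((↑) : ℝ → ℂ) (𝓝[≠] x₀) (𝓝[≠] (x₀ : ℂ)) :=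
    Complex.continuous_ofReal.continuousWithinAt.tendsto_nhdsWithin
      fun x hx ↦ Complex.ofReal_injective.ne hx
  exact hf.eqOn_of_preconnected_of_frequently_eq hg hU hx₀
    (h_ofReal.frequently (Frequently.of_forall hfg))

def strip (ε : ℝ) : Set ℂ := Complex.im ⁻¹' Ioo (-ε) ε

section Strip

variable {ε : ℝ} {z : ℂ}

theorem mem_strip : z ∈ strip ε ↔ |z.im| < ε := abs_lt.symm

theorem isOpen_strip (ε : ℝ) : IsOpen (strip ε) := isOpen_Ioo.preimage Complex.continuous_im

theorem isPreconnected_strip (ε : ℝ) : IsPreconnected (strip ε) :=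
  ((convex_Ioo (-ε) ε).linear_preimage Complex.imLm).isPreconnected

theorem sub_ofReal_mem_strip (hz : z ∈ strip ε) (t : ℝ) : z - t ∈ strip ε := by
  simpa [strip] using hz

end Strip

noncomputable def halfPlanePoissonKernel (ε : ℝ) (w : ℂ) : ℂ :=
  ((ε / π : ℝ) : ℂ) * ((ε : ℂ) ^ 2 + w ^ 2)⁻¹

section Kernel

open ProbabilityTheory

variable {ε : ℝ} {w z : ℂ}

theorem re_ofReal_sq_add_sq (ε : ℝ) (w : ℂ) :
    ((ε : ℂ) ^ 2 + w ^ 2).re = w.re ^ 2 + (ε ^ 2 - w.im ^ 2) := by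
  simp only [sq, Complex.add_re, Complex.mul_re, Complex.ofReal_re, Complex.ofReal_im, mul_zero,
    sub_zero]
  ring

theorem re_ofReal_sq_add_sq_pos (hw : |w.im| < ε) : 0 < ((ε : ℂ) ^ 2 + w ^ 2).re := by
  rw [re_ofReal_sq_add_sq]
  nlinarith [sq_abs w.im, abs_nonneg w.im, sq_nonneg w.re]

theorem differentiableAt_halfPlanePoissonKernel (hw : |w.im| < ε) :
    DifferentiableAt ℂ (halfPlanePoissonKernel ε) w := by
  have hne : (ε : ℂ) ^ 2 + w ^ 2 ≠ 0 := fun h ↦ by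
    simpa [h] using re_ofReal_sq_add_sq_pos hw
  unfold halfPlanePoissonKernel
  fun_prop (disch := exact hne)

theorem re_halfPlanePoissonKernel_nonneg (hw : |w.im| < ε) :
    0 ≤ (halfPlanePoissonKernel ε w).re := by
  have hε : 0 ≤ ε := (abs_nonneg _).trans hw.le
  rw [halfPlanePoissonKernel, Complex.re_ofReal_mul, Complex.inv_re]
  exact mul_nonneg (by positivity)
    (div_nonneg (re_ofReal_sq_add_sq_pos hw).le (Complex.normSq_nonneg _))

theorem norm_halfPlanePoissonKernel_le (hw : |w.im| < ε) :
    ‖halfPlanePoissonKernel ε w‖ ≤ ε / π * (w.re ^ 2 + (ε ^ 2 - w.im ^ 2))⁻¹ := by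
  have hε : 0 ≤ ε := (abs_nonneg _).trans hw.le
  rw [halfPlanePoissonKernel, norm_mul, norm_inv, Complex.norm_real,
    Real.norm_of_nonneg (by positivity), ← re_ofReal_sq_add_sq]
  gcongr
  · exact re_ofReal_sq_add_sq_pos hw
  · exact Complex.re_le_norm _

theorem halfPlanePoissonKernel_ofReal_sub (hε : 0 ≤ ε) (x t : ℝ) :
    halfPlanePoissonKernel ε (x - t) = cauchyPDFReal x ε.toNNReal t := by
  rw [halfPlanePoissonKernel, cauchyPDFReal, Real.coe_toNNReal _ hε]
  push_cast
  ring

theorem cauchyPDFReal_le_three_mul {x x₀ : ℝ} {γ : ℝ≥0} (hγ : 0 < γ) (hx : |x - x₀| ≤ γ)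
    (t : ℝ) : cauchyPDFReal x γ t ≤ 3 * cauchyPDFReal x₀ γ t := by
  have hγ' : (0 : ℝ) < γ := hγ
  have h_sq : (t - x₀) ^ 2 + γ ^ 2 ≤ 3 * ((t - x) ^ 2 + γ ^ 2) := by
    nlinarith [sq_abs (x - x₀), abs_nonneg (x - x₀), sq_nonneg (t - x - (x - x₀))]
  rw [cauchyPDFReal, cauchyPDFReal, mul_left_comm, ← inv_inv (3 : ℝ), ← mul_inv]
  gcongr
  linarith

theorem norm_halfPlanePoissonKernel_sub_le {γ : ℝ≥0} (hγ : 0 < γ) (hz : |z.im| + γ ≤ ε)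
    (t : ℝ) : ‖halfPlanePoissonKernel ε (z - t)‖ ≤ ε / γ * cauchyPDFReal z.re γ t := by
  have hγ' : (0 : ℝ) < γ := hγ
  have hε : 0 ≤ ε := by linarith [abs_nonneg z.im]
  have h_im : |(z - t).im| < ε := by
    simp only [Complex.sub_im, Complex.ofReal_im, sub_zero]
    linarith
  have h_sq : (γ : ℝ) ^ 2 ≤ ε ^ 2 - z.im ^ 2 := by nlinarith [sq_abs z.im, abs_nonneg z.im]
  refine (norm_halfPlanePoissonKernel_le h_im).trans ?_
  rw [cauchyPDFReal, show ε / γ * (π⁻¹ * γ * ((t - z.re) ^ 2 + γ ^ 2)⁻¹)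
    = ε / π * ((t - z.re) ^ 2 + γ ^ 2)⁻¹ by field_simp]
  simp only [Complex.sub_re, Complex.ofReal_re, Complex.sub_im, Complex.ofReal_im, sub_zero]
  exact mul_le_mul_of_nonneg_left (inv_anti₀ (by positivity) (by nlinarith))
    (div_nonneg hε pi_pos.le)

end Kernel

noncomputable def halfPlanePoissonIntegral (ε : ℝ) (φ : ℝ → ℂ) (z : ℂ) : ℂ :=
  ∫ t : ℝ, φ t * halfPlanePoissonKernel ε (z - t)

section PoissonIntegral

open ProbabilityTheory

variable {ε M : ℝ} {φ : ℝ → ℂ} {z : ℂ}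

theorem continuous_halfPlanePoissonKernel_sub_ofReal (hz : z ∈ strip ε) :
    Continuous fun t : ℝ ↦ halfPlanePoissonKernel ε (z - t) :=
  ContinuousOn.comp_continuous (g := halfPlanePoissonKernel ε) (f := fun t : ℝ ↦ z - t)
    (fun w hw ↦
      (differentiableAt_halfPlanePoissonKernel (mem_strip.1 hw)).continuousAt.continuousWithinAt)
    (by fun_prop) (sub_ofReal_mem_strip hz)

theorem norm_mul_halfPlanePoissonKernel_sub_le (hM : ∀ t, ‖φ t‖ ≤ M) {x₀ : ℝ} {γ : ℝ≥0}
    (hγ : 0 < γ) (hz_im : |z.im| + γ ≤ ε) (hz_re : |z.re - x₀| ≤ γ) (t : ℝ) :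
    ‖φ t * halfPlanePoissonKernel ε (z - t)‖ ≤ M * (ε / γ * (3 * cauchyPDFReal x₀ γ t)) := by
  have hε : 0 ≤ ε := by linarith [abs_nonneg z.im, γ.2]
  rw [norm_mul]
  exact mul_le_mul (hM t) ((norm_halfPlanePoissonKernel_sub_le hγ hz_im t).trans
    (mul_le_mul_of_nonneg_left (cauchyPDFReal_le_three_mul hγ hz_re t) (by positivity)))
    (norm_nonneg _) ((norm_nonneg _).trans (hM t))

theorem integrable_mul_halfPlanePoissonKernel_sub (hφ : AEStronglyMeasurable φ)
    (hM : ∀ t, ‖φ t‖ ≤ M) (hz : z ∈ strip ε) :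
    Integrable fun t : ℝ ↦ φ t * halfPlanePoissonKernel ε (z - t) := by
  set γ := (ε - |z.im|).toNNReal
  have hγ : 0 < γ := by simpa [γ] using mem_strip.1 hz
  have hγ_eq : (γ : ℝ) = ε - |z.im| := Real.coe_toNNReal _ (by linarith [mem_strip.1 hz])
  refine ((integrable_cauchyPDFReal z.re).const_mul 3 |>.const_mul _ |>.const_mul M).mono'
    (hφ.mul (continuous_halfPlanePoissonKernel_sub_ofReal hz).aestronglyMeasurable)
    (.of_forall <| norm_mul_halfPlanePoissonKernel_sub_le hM hγ (by rw [hγ_eq]; linarith)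
      (by simp))

theorem differentiableOn_halfPlanePoissonIntegral (hφ : AEStronglyMeasurable φ)
    (hM : ∀ t, ‖φ t‖ ≤ M) : DifferentiableOn ℂ (halfPlanePoissonIntegral ε φ) (strip ε) := by
  intro z₀ hz₀
  set γ := ((ε - |z₀.im|) / 2).toNNReal
  have hγ : 0 < γ := by simpa [γ] using mem_strip.1 hz₀
  have hγ_eq : (γ : ℝ) = (ε - |z₀.im|) / 2 :=
    Real.coe_toNNReal _ (by linarith [mem_strip.1 hz₀])
  set U := {z : ℂ | |z.im| < |z₀.im| + γ} ∩ {z : ℂ | |z.re - z₀.re| < γ}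
  have hU : U ∈ 𝓝 z₀ :=
    ((isOpen_lt (by fun_prop) continuous_const).inter
      (isOpen_lt (by fun_prop) continuous_const)).mem_nhds ⟨by simpa using hγ, by simpa using hγ⟩
  have hU_im : ∀ z ∈ U, |z.im| + γ ≤ ε := fun z hz ↦ by
    have h : |z.im| < |z₀.im| + γ := hz.1
    linarith
  have hU_strip : ∀ z ∈ U, z ∈ strip ε := fun z hz ↦
    mem_strip.2 (by linarith [hU_im z hz, γ.2])
  have h_diff (t : ℝ) : DifferentiableOn ℂ (fun z ↦ φ t * halfPlanePoissonKernel ε (z - t)) U :=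
    fun z hz ↦ ((differentiableAt_halfPlanePoissonKernel
      (mem_strip.1 (sub_ofReal_mem_strip (hU_strip z hz) t))).comp z
      (differentiableAt_id.sub_const _)).const_mul _ |>.differentiableWithinAt
  exact (differentiableAt_integral_of_dominated hU
    (fun z hz ↦
      hφ.mul (continuous_halfPlanePoissonKernel_sub_ofReal (hU_strip z hz)).aestronglyMeasurable)
    (.of_forall h_diff)
    (.of_forall fun t z hz ↦ norm_mul_halfPlanePoissonKernel_sub_le hM hγ (hU_im z hz) hz.2.le t)
    ((integrable_cauchyPDFReal z₀.re).const_mul 3 |>.const_mul _ |>.const_mul M))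
    |>.differentiableWithinAt

theorem re_halfPlanePoissonIntegral_nonneg {f : ℝ → ℝ} (hf : AEStronglyMeasurable f)
    (hf_nonneg : ∀ t, 0 ≤ f t) (hf_le : ∀ t, f t ≤ M) (hz : z ∈ strip ε) :
    0 ≤ (halfPlanePoissonIntegral ε (fun t ↦ (f t : ℂ)) z).re := by
  have hM (t : ℝ) : ‖(f t : ℂ)‖ ≤ M := by
    rw [Complex.norm_real, Real.norm_of_nonneg (hf_nonneg t)]
    exact hf_le t
  rw [halfPlanePoissonIntegral, ← RCLike.re_to_complex, ← integral_re
    (integrable_mul_halfPlanePoissonKernel_sub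
      (Complex.continuous_ofReal.comp_aestronglyMeasurable hf) hM hz)]
  refine integral_nonneg fun t ↦ ?_
  simpa only [Pi.zero_apply, RCLike.re_to_complex, Complex.re_ofReal_mul] using
    mul_nonneg (hf_nonneg t)
      (re_halfPlanePoissonKernel_nonneg (mem_strip.1 (sub_ofReal_mem_strip hz t)))

theorem integral_halfPlanePoissonKernel_sub_eq_one (hz : z ∈ strip ε) :
    ∫ t : ℝ, halfPlanePoissonKernel ε (z - t) = 1 := by
  have hε : 0 < ε := (abs_nonneg _).trans_lt (mem_strip.1 hz)
  have h_an : AnalyticOnNhd ℂ (halfPlanePoissonIntegral ε 1) (strip ε) :=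
    (differentiableOn_halfPlanePoissonIntegral aestronglyMeasurable_const
      fun _ ↦ norm_one.le).analyticOnNhd (isOpen_strip ε)
  have h_real (x : ℝ) : halfPlanePoissonIntegral ε 1 x = 1 := by
    simp only [halfPlanePoissonIntegral, Pi.one_apply, one_mul,
      halfPlanePoissonKernel_ofReal_sub hε.le, integral_complex_ofReal,
      integral_cauchyPDFReal_eq_one x (Real.toNNReal_pos.2 hε).ne', Complex.ofReal_one]
  have := h_an.eqOn_of_preconnected_of_eq_ofReal analyticOnNhd_const (isPreconnected_strip ε)
    (x₀ := 0) (by simpa [mem_strip] using hε) h_real hz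
  simpa [halfPlanePoissonIntegral] using this

end PoissonIntegral

theorem integral_indicator_inv_sq {δ : ℝ} (hδ : 0 < δ) :
    ∫ s, {s : ℝ | δ ≤ |s|}.indicator (fun s ↦ (s ^ 2)⁻¹) s = 2 / δ := by
  have h_abs (s : ℝ) : {s : ℝ | δ ≤ |s|}.indicator (fun s ↦ (s ^ 2)⁻¹) s
      = (Ici δ).indicator (fun u ↦ u ^ (-2 : ℝ)) |s| := by
    by_cases hs : δ ≤ |s|
    · rw [indicator_of_mem (show s ∈ {s : ℝ | δ ≤ |s|} from hs),
        indicator_of_mem (mem_Ici.2 hs), rpow_neg (abs_nonneg s), rpow_two, sq_abs]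
    · rw [indicator_of_notMem (show s ∉ {s : ℝ | δ ≤ |s|} from hs),
        indicator_of_notMem (by simpa using hs)]
  rw [funext h_abs, integral_comp_abs, setIntegral_indicator measurableSet_Ici,
    inter_eq_right.2 (Ici_subset_Ioi.2 hδ), integral_Ici_eq_integral_Ioi,
    integral_Ioi_rpow_of_lt (by norm_num) hδ]
  norm_num [rpow_neg_one]
  ring

theorem integrable_indicator_inv_sq {δ : ℝ} (hδ : 0 < δ) :
    Integrable ({s : ℝ | δ ≤ |s|}.indicator fun s ↦ (s ^ 2)⁻¹) :=
  .of_integral_ne_zero (by rw [integral_indicator_inv_sq hδ]; positivity)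

section Approximation

variable {ε C δ : ℝ} {φ : ℝ → ℂ} {z₀ : ℂ}

theorem norm_sub_mul_halfPlanePoissonKernel_le (hz₀ : z₀ ∈ strip ε)
    (hC : ∀ t, ‖φ t - φ z₀.re‖ ≤ C) (hδ : 0 < δ)
    (hφ_loc : ∀ t ∈ Ioo (z₀.re - δ) (z₀.re + δ), φ t = φ z₀.re) (t : ℝ) :
    ‖(φ t - φ z₀.re) * halfPlanePoissonKernel ε (z₀ - t)‖
      ≤ C * (ε / π) * {s : ℝ | δ ≤ |s|}.indicator (fun s ↦ (s ^ 2)⁻¹) (t - z₀.re) := by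
  have h_im : |(z₀ - t).im| < ε := by simpa using mem_strip.1 hz₀
  have hε : 0 ≤ ε := (abs_nonneg _).trans h_im.le
  by_cases ht : δ ≤ |t - z₀.re|
  · have h_pos : 0 < (t - z₀.re) ^ 2 := by nlinarith [sq_abs (t - z₀.re)]
    have h_kernel : ‖halfPlanePoissonKernel ε (z₀ - t)‖ ≤ ε / π * ((t - z₀.re) ^ 2)⁻¹ := by
      refine (norm_halfPlanePoissonKernel_le h_im).trans
        (mul_le_mul_of_nonneg_left (inv_anti₀ h_pos ?_) (div_nonneg hε pi_pos.le))
      simp only [Complex.sub_re, Complex.ofReal_re, Complex.sub_im, Complex.ofReal_im, sub_zero]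
      nlinarith [sq_abs z₀.im, mem_strip.1 hz₀, abs_nonneg z₀.im]
    rw [indicator_of_mem (show t - z₀.re ∈ {s : ℝ | δ ≤ |s|} from ht), norm_mul, mul_assoc]
    exact mul_le_mul (hC t) h_kernel (norm_nonneg _) ((norm_nonneg _).trans (hC t))
  · have ht' : t ∈ Ioo (z₀.re - δ) (z₀.re + δ) := by
      constructor <;> linarith [le_abs_self (t - z₀.re), neg_abs_le (t - z₀.re)]
    rw [hφ_loc t ht', sub_self, zero_mul, norm_zero]
    exact mul_nonneg (mul_nonneg ((norm_nonneg _).trans (hC t)) (div_nonneg hε pi_pos.le))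
      (indicator_nonneg (fun s _ ↦ by positivity) _)

theorem norm_halfPlanePoissonIntegral_sub_le (hφ : AEStronglyMeasurable φ)
    (hz₀ : z₀ ∈ strip ε) (hC : ∀ t, ‖φ t - φ z₀.re‖ ≤ C) (hδ : 0 < δ)
    (hφ_loc : ∀ t ∈ Ioo (z₀.re - δ) (z₀.re + δ), φ t = φ z₀.re) :
    ‖halfPlanePoissonIntegral ε φ z₀ - φ z₀.re‖ ≤ 2 * C * ε / (π * δ) := by
  set G := {s : ℝ | δ ≤ |s|}.indicator fun s ↦ (s ^ 2)⁻¹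
  have hM (t : ℝ) : ‖φ t‖ ≤ C + ‖φ z₀.re‖ := by
    linarith [norm_sub_norm_le (φ t) (φ z₀.re), hC t]
  have h_sub : halfPlanePoissonIntegral ε φ z₀ - φ z₀.re
      = ∫ t : ℝ, (φ t - φ z₀.re) * halfPlanePoissonKernel ε (z₀ - t) := by
    simp only [sub_mul]
    rw [integral_sub (integrable_mul_halfPlanePoissonKernel_sub hφ hM hz₀)
      (integrable_mul_halfPlanePoissonKernel_sub aestronglyMeasurable_const (fun _ ↦ le_rfl) hz₀),
      integral_const_mul, integral_halfPlanePoissonKernel_sub_eq_one hz₀, mul_one,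
      halfPlanePoissonIntegral]
  calc ‖halfPlanePoissonIntegral ε φ z₀ - φ z₀.re‖
      ≤ ∫ t : ℝ, C * (ε / π) * G (t - z₀.re) := by
        rw [h_sub]
        exact norm_integral_le_of_norm_le
          (((integrable_indicator_inv_sq hδ).comp_sub_right _).const_mul _)
          (.of_forall (norm_sub_mul_halfPlanePoissonKernel_le hz₀ hC hδ hφ_loc))
    _ = 2 * C * ε / (π * δ) := by
        rw [integral_const_mul, integral_sub_right_eq_self G, integral_indicator_inv_sq hδ]
        field_simp

end Approximation

theorem exists_holomorphic_approximation_on_strip_general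
    (C : ℝ) (f : ℝ → ℝ) (hf : Measurable f)
    (hf' : ∀ x : ℝ, f x ∈ Set.Icc 0 C)
    (ε : ℝ) :
    ∃ g : ℂ → ℂ,
      DifferentiableOn ℂ g {z : ℂ | -ε < z.im ∧ z.im < ε} ∧
      (∀ z ∈ {z : ℂ | -ε < z.im ∧ z.im < ε}, 0 ≤ (g z).re) ∧
      ∀ δ > (0 : ℝ), ∀ z₀ ∈ {z : ℂ | -ε < z.im ∧ z.im < ε},
        (∀ x ∈ Set.Ioo (z₀.re - δ) (z₀.re + δ), f x = f z₀.re) →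
        ‖g z₀ - (f z₀.re : ℂ)‖ ≤ 2 * C * ε / (Real.pi * δ) := by
  have hφ : AEStronglyMeasurable fun t ↦ (f t : ℂ) :=
    (Complex.measurable_ofReal.comp hf).aestronglyMeasurable
  have h_norm (t : ℝ) : ‖(f t : ℂ)‖ ≤ C := by
    rw [Complex.norm_real, Real.norm_of_nonneg (hf' t).1]
    exact (hf' t).2
  have h_osc (x y : ℝ) : ‖(f x : ℂ) - f y‖ ≤ C := by
    rw [← Complex.ofReal_sub, Complex.norm_real, Real.norm_eq_abs, abs_le]
    constructor <;> linarith [(hf' x).1, (hf' x).2, (hf' y).1, (hf' y).2]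
  refine ⟨halfPlanePoissonIntegral ε fun t ↦ (f t : ℂ),
    differentiableOn_halfPlanePoissonIntegral hφ h_norm,
    fun z hz ↦ re_halfPlanePoissonIntegral_nonneg hf.aestronglyMeasurable (fun t ↦ (hf' t).1)
      (fun t ↦ (hf' t).2) hz,
    fun δ hδ z₀ hz₀ hf_loc ↦ norm_halfPlanePoissonIntegral_sub_le hφ hz₀ (fun t ↦ h_osc t z₀.re) hδ
      fun t ht ↦ by rw [hf_loc t ht]⟩

/-- Let `C > 0`, let `f : ℝ → [0, C]` be measurable, and let
`ε ∈ (0, 1)`.  Then there exists a function `g` holomorphic on the strip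
`S_ε = {x + iy : -ε < y < ε}` with `Re g(z) ≥ 0` on `S_ε`, such that for every
`δ > 0` and every `z₀ = x₀ + i y₀ ∈ S_ε` with `f(x) = f(x₀)` for all
`x ∈ (x₀ − δ, x₀ + δ)`, one has `|g(z₀) − f(x₀)| ≤ 2Cε/(πδ)`. -/
theorem exists_holomorphic_approximation_on_strip
    (C : ℝ) (hC : 0 < C) (f : ℝ → ℝ) (hf : Measurable f)
    (hf' : ∀ x : ℝ, f x ∈ Set.Icc 0 C)
    (ε : ℝ) (hε : ε ∈ Set.Ioo (0 : ℝ) 1) :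
    ∃ g : ℂ → ℂ,
      DifferentiableOn ℂ g {z : ℂ | -ε < z.im ∧ z.im < ε} ∧
      (∀ z ∈ {z : ℂ | -ε < z.im ∧ z.im < ε}, 0 ≤ (g z).re) ∧
      ∀ δ > (0 : ℝ), ∀ z₀ ∈ {z : ℂ | -ε < z.im ∧ z.im < ε},
        (∀ x ∈ Set.Ioo (z₀.re - δ) (z₀.re + δ), f x = f z₀.re) →
        ‖g z₀ - (f z₀.re : ℂ)‖ ≤ 2 * C * ε / (Real.pi * δ) :=
  exists_holomorphic_approximation_on_strip_general C f hf hf' ε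
end

section
/- Let V = {(z,w) ∈ ℂ² : |w| < 1 + |z|²}. Then there exists an injective holomorphic map Φ : ℂ² → ℂ² whose image is contained in V, i.e. |π²(Φ(p))| < 1 + |π¹(Φ(p))|² for every p ∈ ℂ². -/
/-!
Let `a = 1/32` and `F (z, w) = a • (z + w², w + (z + w²)²)`, a polynomial automorphism of `ℂ²`
with an attracting fixed point at the origin. The maps `F⁻ⁿ ∘ (aⁿ •)` are the compositions
`shear 1 ∘ shear a ∘ ⋯ ∘ shear aⁿ⁻¹` of maps that move points near the origin by `O(aʲ)`; they
converge, uniformly near `0` and then everywhere, to an injective map `Φ` with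
`F ∘ Φ = Φ ∘ (a •)`, and Cauchy estimates show that `Φ` is holomorphic. The horn
`{8 (1 + |z|²) ≤ |w|}` is `F`-invariant and stays away from the origin, whereas
`Fᵐ (Φ p) = Φ (aᵐ • p) → 0`; hence `Φ` misses the horn, and `(z, w) ↦ (z, w / 8)` moves its image
into `V`.
-/

open Filter Topology Metric Set

section UniformLimit

variable {E F : Type*} [NormedAddCommGroup E] [NormedSpace ℂ E]
  [NormedAddCommGroup F] [NormedSpace ℂ F]

theorem norm_fderiv_le_of_forall_mem_ball_norm_le {h : E → F} {c : E} {r ε : ℝ} (hr : 0 < r)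
    (hd : DifferentiableOn ℂ h (ball c r)) (hε : ∀ z ∈ ball c r, ‖h z‖ ≤ ε) :
    ‖fderiv ℂ h c‖ ≤ 2 * ε / r := by
  refine Complex.norm_fderiv_le_div_of_mapsTo_ball hd (fun z hz => ?_) hr
  rw [mem_closedBall, dist_eq_norm, two_mul]
  exact (norm_sub_le _ _).trans (add_le_add (hε z hz) (hε c (mem_ball_self hr)))

theorem uniformCauchySeqOn_fderiv_of_tendstoUniformlyOn {f : ℕ → E → F} {g : E → F} {c : E}
    {R : ℝ} (hR : 0 < R) (hf : ∀ n, DifferentiableOn ℂ (f n) (ball c (2 * R)))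
    (hfg : TendstoUniformlyOn f g atTop (ball c (2 * R))) :
    UniformCauchySeqOn (fun n => fderiv ℂ (f n)) atTop (ball c R) := by
  rw [Metric.uniformCauchySeqOn_iff]
  intro ε hε
  obtain ⟨N, hN⟩ := Metric.uniformCauchySeqOn_iff.mp hfg.uniformCauchySeqOn (ε * R / 4)
    (by positivity)
  refine ⟨N, fun m hm n hn y hy => ?_⟩
  have hsub : ball y R ⊆ ball c (2 * R) :=
    ball_subset_ball' (by linarith [mem_ball.mp hy])
  have hdiff : ∀ k, DifferentiableAt ℂ (f k) y := fun k =>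
    (hf k).differentiableAt (isOpen_ball.mem_nhds (hsub (mem_ball_self hR)))
  rw [dist_eq_norm, ← fderiv_sub (hdiff m) (hdiff n)]
  calc ‖fderiv ℂ (f m - f n) y‖ ≤ 2 * (ε * R / 4) / R :=
        norm_fderiv_le_of_forall_mem_ball_norm_le hR (((hf m).sub (hf n)).mono hsub)
          fun z hz => by simpa [dist_eq_norm] using (hN m hm n hn z (hsub hz)).le
    _ < ε := by field_simp; linarith

theorem TendstoUniformlyOn.differentiableOn_of_isOpen [CompleteSpace F] {f : ℕ → E → F}
    {g : E → F} {U : Set E} (hfg : TendstoUniformlyOn f g atTop U) (hU : IsOpen U)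
    (hf : ∀ n, DifferentiableOn ℂ (f n) U) : DifferentiableOn ℂ g U := by
  intro x hx
  obtain ⟨r, hr, hrU⟩ := Metric.isOpen_iff.mp hU x hx
  have hR : 0 < r / 2 := half_pos hr
  have hball : ball x (2 * (r / 2)) ⊆ U := by rwa [mul_div_cancel₀ r two_ne_zero]
  have hcauchy := uniformCauchySeqOn_fderiv_of_tendstoUniformlyOn hR
    (fun n => (hf n).mono hball) (hfg.mono hball)
  have hlim : ∀ y ∈ ball x (r / 2), Tendsto (fun n => fderiv ℂ (f n) y) atTop
      (𝓝 (limUnder atTop fun n => fderiv ℂ (f n) y)) := fun y hy =>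
    (hcauchy.cauchySeq hy).tendsto_limUnder
  refine (hasFDerivAt_of_tendstoUniformlyOn isOpen_ball
    (hcauchy.tendstoUniformlyOn_of_tendsto hlim) (fun n y hy => ?_)
    (fun y hy => hfg.tendsto_at (hball (ball_subset_ball (by linarith) hy)))
    (mem_ball_self hR)).differentiableAt.differentiableWithinAt
  exact ((hf n).differentiableAt (hU.mem_nhds
    (hball (ball_subset_ball (by linarith) hy)))).hasFDerivAt

end UniformLimit

theorem tendstoUniformlyOn_limUnder_of_dist_le_geometric {α β : Type*} [PseudoMetricSpace β]
    [CompleteSpace β] [Nonempty β] {f : ℕ → α → β} {s : Set α} {C r : ℝ} (hr₀ : 0 ≤ r)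
    (hr : r < 1) (hf : ∀ x ∈ s, ∀ n, dist (f n x) (f (n + 1) x) ≤ C * r ^ n) :
    TendstoUniformlyOn f (fun x => limUnder atTop fun n => f n x) atTop s := by
  have hlim : Tendsto (fun n => C * r ^ n / (1 - r)) atTop (𝓝 0) := by
    simpa using ((tendsto_pow_atTop_nhds_zero_of_lt_one hr₀ hr).const_mul C).div_const (1 - r)
  rw [Metric.tendstoUniformlyOn_iff]
  intro ε hε
  filter_upwards [hlim.eventually (gt_mem_nhds hε)] with n hn x hx
  rw [dist_comm]
  exact (dist_le_of_le_geometric_of_tendsto r C hr (hf x hx)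
    (cauchySeq_of_le_geometric r C hr (hf x hx)).tendsto_limUnder n).trans_lt hn

noncomputable section

namespace FatouBieberbach

def shearSnd (c : ℂ) (p : ℂ × ℂ) : ℂ := p.2 - c * p.1 ^ 2

def shear (c : ℂ) (p : ℂ × ℂ) : ℂ × ℂ := (p.1 - c * shearSnd c p ^ 2, shearSnd c p)

def a : ℂ := 1 / 32

def shearComp : ℕ → ℂ × ℂ → ℂ × ℂ
  | 0, p => p
  | n + 1, p => shearComp n (shear (a ^ n) p)

/-- `F = a • (shear 1)⁻¹`. -/
def F (p : ℂ × ℂ) : ℂ × ℂ := (a * (p.1 + p.2 ^ 2), a * (p.2 + (p.1 + p.2 ^ 2) ^ 2))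

lemma norm_a : ‖a‖ = 1 / 32 := by norm_num [a]

lemma shear_smul (c t : ℂ) (p : ℂ × ℂ) : shear c (t • p) = t • shear (t * c) p := by
  ext <;> simp only [shear, shearSnd, Prod.smul_fst, Prod.smul_snd, smul_eq_mul] <;> ring

lemma shear_zero (c : ℂ) : shear c 0 = 0 := by simp [shear, shearSnd]

lemma F_shear_one (p : ℂ × ℂ) : F (shear 1 p) = a • p := by
  ext <;> simp only [F, shear, shearSnd, one_mul, Prod.smul_fst, Prod.smul_snd, smul_eq_mul] <;>
    ring

lemma differentiable_shear (c : ℂ) : Differentiable ℂ (shear c) := by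
  unfold shear shearSnd; fun_prop

lemma continuous_F : Continuous F := by unfold F; fun_prop

lemma differentiable_shearComp (n : ℕ) : Differentiable ℂ (shearComp n) := by
  induction n with
  | zero => exact differentiable_id
  | succ n ih => exact ih.comp (differentiable_shear _)

lemma shearComp_zero_right (n : ℕ) : shearComp n 0 = 0 := by
  induction n with
  | zero => rfl
  | succ n ih => rw [shearComp, shear_zero, ih]

lemma shearComp_add (m k : ℕ) (p : ℂ × ℂ) :
    shearComp (m + k) p = shearComp m ((a ^ m)⁻¹ • shearComp k (a ^ m • p)) := by
  induction k generalizing p with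
  | zero => simp [shearComp, smul_smul, pow_ne_zero m (by norm_num [a] : a ≠ 0)]
  | succ k ih =>
    rw [← add_assoc, shearComp, ih, shearComp, shear_smul, ← pow_add]

lemma F_shearComp_succ (n : ℕ) (p : ℂ × ℂ) : F (shearComp (n + 1) p) = shearComp n (a • p) := by
  rw [add_comm, shearComp_add, pow_one, shearComp, shearComp, pow_zero, F_shear_one,
    smul_smul, mul_inv_cancel₀ (by norm_num [a]), one_smul]

section Estimates

variable {c : ℂ} {s : ℝ} {p p' : ℂ × ℂ}

lemma norm_shearSnd_le (hc : ‖c‖ ≤ 1) (hs : s ≤ 1) (hp : ‖p‖ ≤ s) : ‖shearSnd c p‖ ≤ 2 * s := by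
  have h₁ : ‖p.1‖ ≤ s := (norm_fst_le p).trans hp
  have h₂ : ‖p.2‖ ≤ s := (norm_snd_le p).trans hp
  have hs₀ : 0 ≤ s := (norm_nonneg _).trans hp
  calc ‖shearSnd c p‖ ≤ ‖p.2‖ + ‖c‖ * ‖p.1‖ ^ 2 :=
        (norm_sub_le _ _).trans_eq (by rw [norm_mul, norm_pow])
    _ ≤ s + 1 * s ^ 2 := by gcongr
    _ ≤ 2 * s := by nlinarith

lemma norm_shearSnd_sub_le (hc : ‖c‖ ≤ 1) (hs : s ≤ 1 / 2) (hp : ‖p‖ ≤ s) (hp' : ‖p'‖ ≤ s) :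
    ‖shearSnd c p - shearSnd c p'‖ ≤ 2 * ‖p - p'‖ := by
  have h₁ : ‖p.1 + p'.1‖ ≤ 2 * s := by
    linarith [norm_add_le p.1 p'.1, (norm_fst_le p).trans hp, (norm_fst_le p').trans hp']
  have hd₁ : ‖p.1 - p'.1‖ ≤ ‖p - p'‖ := norm_fst_le (p - p')
  have hd₂ : ‖p.2 - p'.2‖ ≤ ‖p - p'‖ := norm_snd_le (p - p')
  have hs₀ : 0 ≤ s := (norm_nonneg _).trans hp
  calc ‖shearSnd c p - shearSnd c p'‖
        = ‖(p.2 - p'.2) - c * ((p.1 + p'.1) * (p.1 - p'.1))‖ := by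
          congr 1; simp only [shearSnd]; ring
    _ ≤ ‖p.2 - p'.2‖ + ‖c‖ * (‖p.1 + p'.1‖ * ‖p.1 - p'.1‖) := by
          simpa [norm_mul] using norm_sub_le (p.2 - p'.2) (c * ((p.1 + p'.1) * (p.1 - p'.1)))
    _ ≤ ‖p - p'‖ + 1 * (2 * s * ‖p - p'‖) := by gcongr
    _ ≤ 2 * ‖p - p'‖ := by nlinarith [norm_nonneg (p - p')]

lemma norm_shear_sub_self_le (hc : ‖c‖ ≤ 1) (hs : s ≤ 1) (hp : ‖p‖ ≤ s) :
    ‖shear c p - p‖ ≤ 4 * s ^ 2 * ‖c‖ := by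
  have hu := norm_shearSnd_le hc hs hp
  have h₁ : ‖p.1‖ ≤ s := (norm_fst_le p).trans hp
  refine norm_prod_le_iff.mpr ⟨?_, ?_⟩
  · calc ‖(shear c p - p).1‖ = ‖c‖ * ‖shearSnd c p‖ ^ 2 := by
          simp [shear, norm_pow]
      _ ≤ ‖c‖ * (2 * s) ^ 2 := by gcongr
      _ = 4 * s ^ 2 * ‖c‖ := by ring
  · calc ‖(shear c p - p).2‖ = ‖c‖ * ‖p.1‖ ^ 2 := by
          simp [shear, shearSnd, norm_pow]
      _ ≤ ‖c‖ * s ^ 2 := by gcongr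
      _ ≤ 4 * s ^ 2 * ‖c‖ := by nlinarith [norm_nonneg c, sq_nonneg s]

lemma norm_shear_sub_self_sub_le (hc : ‖c‖ ≤ 1) (hs : s ≤ 1 / 2) (hp : ‖p‖ ≤ s)
    (hp' : ‖p'‖ ≤ s) : ‖(shear c p - p) - (shear c p' - p')‖ ≤ 8 * s * ‖c‖ * ‖p - p'‖ := by
  have hu : ‖shearSnd c p + shearSnd c p'‖ ≤ 4 * s := by
    linarith [norm_add_le (shearSnd c p) (shearSnd c p'),
      norm_shearSnd_le hc (by linarith) hp, norm_shearSnd_le hc (by linarith) hp']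
  have hu' := norm_shearSnd_sub_le hc hs hp hp'
  have h₁ : ‖p.1 + p'.1‖ ≤ 2 * s := by
    linarith [norm_add_le p.1 p'.1, (norm_fst_le p).trans hp, (norm_fst_le p').trans hp']
  have hd₁ : ‖p.1 - p'.1‖ ≤ ‖p - p'‖ := norm_fst_le (p - p')
  have hs₀ : 0 ≤ s := (norm_nonneg _).trans hp
  refine norm_prod_le_iff.mpr ⟨?_, ?_⟩
  · calc ‖((shear c p - p) - (shear c p' - p')).1‖
          = ‖c‖ * (‖shearSnd c p + shearSnd c p'‖ * ‖shearSnd c p - shearSnd c p'‖) := by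
          rw [← norm_mul, ← norm_mul, ← norm_neg]; congr 1; simp only [shear, Prod.fst_sub]; ring
      _ ≤ ‖c‖ * (4 * s * (2 * ‖p - p'‖)) := by gcongr
      _ = 8 * s * ‖c‖ * ‖p - p'‖ := by ring
  · calc ‖((shear c p - p) - (shear c p' - p')).2‖
          = ‖c‖ * (‖p.1 + p'.1‖ * ‖p.1 - p'.1‖) := by
          rw [← norm_mul, ← norm_mul, ← norm_neg]; congr 1
          simp only [shear, shearSnd, Prod.snd_sub]; ring
      _ ≤ ‖c‖ * (2 * s * ‖p - p'‖) := by gcongr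
      _ ≤ 8 * s * ‖c‖ * ‖p - p'‖ := by
          nlinarith [mul_nonneg (mul_nonneg hs₀ (norm_nonneg c)) (norm_nonneg (p - p'))]

lemma abs_norm_shear_sub_shear_sub_norm_sub_le (hc : ‖c‖ ≤ 1) (hs : s ≤ 1 / 2) (hp : ‖p‖ ≤ s)
    (hp' : ‖p'‖ ≤ s) : |‖shear c p - shear c p'‖ - ‖p - p'‖| ≤ 8 * s * ‖c‖ * ‖p - p'‖ :=
  calc |‖shear c p - shear c p'‖ - ‖p - p'‖| ≤ ‖(shear c p - shear c p') - (p - p')‖ :=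
        abs_norm_sub_norm_le _ _
    _ = ‖(shear c p - p) - (shear c p' - p')‖ := by congr 1; abel
    _ ≤ 8 * s * ‖c‖ * ‖p - p'‖ := norm_shear_sub_self_sub_le hc hs hp hp'

end Estimates

lemma norm_a_pow (n : ℕ) : ‖a ^ n‖ = (1 / 32) ^ n := by rw [norm_pow, norm_a]

lemma norm_a_pow_le_one (n : ℕ) : ‖a ^ n‖ ≤ 1 := by
  rw [norm_a_pow]; exact pow_le_one₀ (by norm_num) (by norm_num)

def radius (n : ℕ) : ℝ := (1 + (1 / 32) ^ n) / 1024

lemma radius_le (n : ℕ) : radius n ≤ 1 / 512 := by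
  have : ((1 : ℝ) / 32) ^ n ≤ 1 := pow_le_one₀ (by norm_num) (by norm_num)
  rw [radius]; linarith

lemma le_radius (n : ℕ) : 1 / 1024 ≤ radius n := by
  have : (0 : ℝ) ≤ (1 / 32) ^ n := by positivity
  rw [radius]; linarith

lemma norm_shear_le_radius {n : ℕ} {x : ℂ × ℂ} (hx : ‖x‖ ≤ radius (n + 1)) :
    ‖shear (a ^ n) x‖ ≤ radius n := by
  have hmove := norm_shear_sub_self_le (norm_a_pow_le_one n) (by norm_num)
    (hx.trans (radius_le _))
  have : (0 : ℝ) ≤ (1 / 32) ^ n := by positivity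
  rw [norm_a_pow] at hmove
  rw [radius, pow_succ] at hx
  calc ‖shear (a ^ n) x‖ ≤ ‖x‖ + ‖shear (a ^ n) x - x‖ := norm_le_norm_add_norm_sub' _ _
    _ ≤ radius n := by rw [radius]; linarith

/-- The factors `1 ± 2⁻ⁿ / 4` by which `shear (a ^ n)` can distort distances are absorbed by
the invariants `(1 + 2⁻ⁿ) / 2` and `2 - 2⁻ⁿ`. -/
lemma shearComp_biLipschitz (n : ℕ) {x y : ℂ × ℂ} (hx : ‖x‖ ≤ radius n) (hy : ‖y‖ ≤ radius n) :
    (1 + (1 / 2) ^ n) / 2 * ‖x - y‖ ≤ ‖shearComp n x - shearComp n y‖ ∧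
      ‖shearComp n x - shearComp n y‖ ≤ (2 - (1 / 2) ^ n) * ‖x - y‖ := by
  induction n generalizing x y with
  | zero => simp only [shearComp, pow_zero]; constructor <;> linarith [norm_nonneg (x - y)]
  | succ n ih =>
    obtain ⟨hlo, hup⟩ := ih (norm_shear_le_radius hx) (norm_shear_le_radius hy)
    have hdev := abs_le.mp (abs_norm_shear_sub_shear_sub_norm_sub_le (s := 1 / 512)
      (norm_a_pow_le_one n) (by norm_num) (hx.trans (radius_le _)) (hy.trans (radius_le _)))
    set h : ℝ := (1 / 2) ^ n
    set δ : ℝ := 8 * (1 / 512) * ‖a ^ n‖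
    have hh : 0 ≤ h ∧ h ≤ 1 := ⟨by positivity, pow_le_one₀ (by norm_num) (by norm_num)⟩
    have hδ : 0 ≤ δ ∧ δ ≤ h / 4 := by
      refine ⟨by positivity, ?_⟩
      have : ((1 : ℝ) / 32) ^ n ≤ h := pow_le_pow_left₀ (by norm_num) (by norm_num) n
      simp only [δ, norm_a_pow]; linarith
    rw [pow_succ]
    simp only [shearComp]
    constructor
    · calc (1 + h * (1 / 2)) / 2 * ‖x - y‖ ≤ (1 + h) / 2 * ((1 - δ) * ‖x - y‖) := by
            rw [← mul_assoc]; gcongr; nlinarith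
        _ ≤ (1 + h) / 2 * ‖shear (a ^ n) x - shear (a ^ n) y‖ := by gcongr; linarith
        _ ≤ _ := hlo
    · calc _ ≤ (2 - h) * ‖shear (a ^ n) x - shear (a ^ n) y‖ := hup
        _ ≤ (2 - h) * ((1 + δ) * ‖x - y‖) := by gcongr; linarith; linarith
        _ ≤ (2 - h * (1 / 2)) * ‖x - y‖ := by rw [← mul_assoc]; gcongr; nlinarith

lemma dist_shearComp_succ_le (n : ℕ) {x : ℂ × ℂ} (hx : ‖x‖ ≤ 1 / 1024) :
    dist (shearComp n x) (shearComp (n + 1) x) ≤ 1 / 32768 * (1 / 32) ^ n := by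
  have hx₁ := hx.trans (le_radius (n + 1))
  have hmove := norm_shear_sub_self_le (norm_a_pow_le_one n) (by norm_num)
    (hx₁.trans (radius_le _))
  rw [norm_a_pow] at hmove
  have h : (0 : ℝ) ≤ (1 / 2) ^ n := by positivity
  rw [dist_eq_norm, shearComp]
  calc _ ≤ (2 - (1 / 2) ^ n) * ‖x - shear (a ^ n) x‖ :=
        (shearComp_biLipschitz n (hx.trans (le_radius n)) (norm_shear_le_radius hx₁)).2
    _ ≤ 2 * (4 * (1 / 512) ^ 2 * (1 / 32) ^ n) := by
        rw [norm_sub_rev]; gcongr; linarith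
    _ = 1 / 32768 * (1 / 32) ^ n := by ring

def phi (p : ℂ × ℂ) : ℂ × ℂ := limUnder atTop fun n => shearComp n p

lemma tendstoUniformlyOn_shearComp : TendstoUniformlyOn shearComp phi atTop (ball 0 (1 / 1024)) :=
  tendstoUniformlyOn_limUnder_of_dist_le_geometric (by norm_num) (by norm_num) fun _ hx n =>
    dist_shearComp_succ_le n (mem_ball_zero_iff.mp hx).le

lemma differentiableOn_phi : DifferentiableOn ℂ phi (ball 0 (1 / 1024)) :=
  tendstoUniformlyOn_shearComp.differentiableOn_of_isOpen isOpen_ball fun n =>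
    (differentiable_shearComp n).differentiableOn

lemma norm_sub_le_two_mul_norm_phi_sub {x y : ℂ × ℂ} (hx : x ∈ ball 0 (1 / 1024))
    (hy : y ∈ ball 0 (1 / 1024)) : ‖x - y‖ ≤ 2 * ‖phi x - phi y‖ := by
  refine ge_of_tendsto' ((((tendstoUniformlyOn_shearComp.tendsto_at hx).sub
    (tendstoUniformlyOn_shearComp.tendsto_at hy)).norm).const_mul 2) fun n => ?_
  have hlo := (shearComp_biLipschitz n ((mem_ball_zero_iff.mp hx).le.trans (le_radius n))
    ((mem_ball_zero_iff.mp hy).le.trans (le_radius n))).1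
  have : (0 : ℝ) ≤ (1 / 2) ^ n := by positivity
  nlinarith [norm_nonneg (x - y)]

lemma tendsto_a_pow_smul (p : ℂ × ℂ) : Tendsto (fun m : ℕ => a ^ m • p) atTop (𝓝 0) := by
  simpa using (tendsto_pow_atTop_nhds_zero_of_norm_lt_one
    (show ‖a‖ < 1 by norm_num [norm_a])).smul_const p

lemma eventually_smul_mem_ball (p : ℂ × ℂ) {r : ℝ} (hr : 0 < r) :
    ∀ᶠ m in atTop, a ^ m • p ∈ ball 0 r :=
  (tendsto_a_pow_smul p).eventually (ball_mem_nhds 0 hr)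

lemma tendsto_shearComp_of_smul_mem_ball {p : ℂ × ℂ} {m : ℕ}
    (hm : a ^ m • p ∈ ball 0 (1 / 1024)) :
    Tendsto (fun n => shearComp n p) atTop (𝓝 (shearComp m ((a ^ m)⁻¹ • phi (a ^ m • p)))) := by
  refine (tendsto_add_atTop_iff_nat m).mp ?_
  simp_rw [add_comm _ m, shearComp_add]
  exact ((differentiable_shearComp m).continuous.tendsto _).comp
    (((continuous_const_smul _).tendsto _).comp (tendstoUniformlyOn_shearComp.tendsto_at hm))

lemma phi_eq_shearComp {p : ℂ × ℂ} {m : ℕ} (hm : a ^ m • p ∈ ball 0 (1 / 1024)) :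
    phi p = shearComp m ((a ^ m)⁻¹ • phi (a ^ m • p)) :=
  (tendsto_shearComp_of_smul_mem_ball hm).limUnder_eq

lemma tendsto_shearComp (p : ℂ × ℂ) : Tendsto (fun n => shearComp n p) atTop (𝓝 (phi p)) := by
  obtain ⟨m, hm⟩ := (eventually_smul_mem_ball p (r := 1 / 1024) (by norm_num)).exists
  rw [phi_eq_shearComp hm]
  exact tendsto_shearComp_of_smul_mem_ball hm

lemma differentiable_phi : Differentiable ℂ phi := by
  intro p
  obtain ⟨m, hm⟩ := (eventually_smul_mem_ball p (r := 1 / 1024) (by norm_num)).exists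
  have hU : IsOpen {x : ℂ × ℂ | a ^ m • x ∈ ball 0 (1 / 1024)} :=
    isOpen_ball.preimage (continuous_const_smul _)
  have hrep : phi =ᶠ[𝓝 p] fun x => shearComp m ((a ^ m)⁻¹ • phi (a ^ m • x)) :=
    eventually_of_mem (hU.mem_nhds hm) fun x hx => phi_eq_shearComp hx
  have hphi : DifferentiableAt ℂ phi (a ^ m • p) :=
    differentiableOn_phi.differentiableAt (isOpen_ball.mem_nhds hm)
  have hinner : DifferentiableAt ℂ (fun x => (a ^ m)⁻¹ • phi (a ^ m • x)) p :=
    (hphi.comp p (differentiableAt_id.const_smul (a ^ m))).const_smul (a ^ m)⁻¹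
  exact ((differentiable_shearComp m).differentiableAt.comp p hinner).congr_of_eventuallyEq hrep

lemma phi_zero : phi 0 = 0 :=
  tendsto_nhds_unique (tendsto_shearComp 0) (by simp [shearComp_zero_right])

lemma F_phi (p : ℂ × ℂ) : F (phi p) = phi (a • p) := by
  refine tendsto_nhds_unique ((continuous_F.tendsto _).comp
    ((tendsto_shearComp p).comp (tendsto_add_atTop_nat 1))) ?_
  simpa [Function.comp_def, F_shearComp_succ] using tendsto_shearComp (a • p)

lemma iterate_F_phi (m : ℕ) (p : ℂ × ℂ) : F^[m] (phi p) = phi (a ^ m • p) := by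
  induction m generalizing p with
  | zero => simp
  | succ m ih => rw [Function.iterate_succ_apply, F_phi, ih, smul_smul, ← pow_succ]

lemma phi_injective : Function.Injective phi := by
  intro p p' h
  obtain ⟨m, hm, hm'⟩ := ((eventually_smul_mem_ball p (r := 1 / 1024) (by norm_num)).and
    (eventually_smul_mem_ball p' (r := 1 / 1024) (by norm_num))).exists
  have key := norm_sub_le_two_mul_norm_phi_sub hm hm'
  rw [← iterate_F_phi, ← iterate_F_phi, h, sub_self, norm_zero, mul_zero] at key
  exact smul_right_injective _ (pow_ne_zero m (by norm_num [a]))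
    (sub_eq_zero.mp (norm_le_zero_iff.mp key))

def horn : Set (ℂ × ℂ) := {p | 8 * (1 + ‖p.1‖ ^ 2) ≤ ‖p.2‖}

lemma mapsTo_F_horn : MapsTo F horn horn := by
  rintro ⟨z, w⟩ (hp : 8 * (1 + ‖z‖ ^ 2) ≤ ‖w‖)
  show 8 * (1 + ‖a * (z + w ^ 2)‖ ^ 2) ≤ ‖a * (w + (z + w ^ 2) ^ 2)‖
  set t := ‖z + w ^ 2‖
  have hz : ‖z‖ ≤ ‖w‖ / 8 := by nlinarith [sq_nonneg (‖z‖ - 1)]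
  have ht : 7 * ‖w‖ ≤ t := by
    have := norm_sub_norm_le (w ^ 2) (-z)
    rw [norm_neg, norm_pow, sub_neg_eq_add, add_comm (w ^ 2) z] at this
    nlinarith
  have hsnd : t ^ 2 - ‖w‖ ≤ ‖w + (z + w ^ 2) ^ 2‖ := by
    have := norm_sub_norm_le ((z + w ^ 2) ^ 2) (-w)
    rwa [norm_neg, norm_pow, sub_neg_eq_add, add_comm _ w] at this
  rw [norm_mul, norm_mul, norm_a]
  nlinarith

lemma phi_notMem_horn (p : ℂ × ℂ) : phi p ∉ horn := by
  intro hp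
  have hlim : Tendsto (fun m : ℕ => phi (a ^ m • p)) atTop (𝓝 0) := by
    rw [← phi_zero]
    exact (differentiable_phi.continuous.tendsto 0).comp (tendsto_a_pow_smul p)
  obtain ⟨m, hm⟩ := (hlim.eventually (ball_mem_nhds 0 (by norm_num : (0 : ℝ) < 8))).exists
  have hmem : 8 * (1 + ‖(phi (a ^ m • p)).1‖ ^ 2) ≤ ‖(phi (a ^ m • p)).2‖ :=
    iterate_F_phi m p ▸ mapsTo_F_horn.iterate m hp
  have hsq := sq_nonneg ‖(phi (a ^ m • p)).1‖
  linarith [hmem, mem_ball_zero_iff.mp hm, norm_snd_le (phi (a ^ m • p))]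

end FatouBieberbach

end

/-- Let `V = {(z, w) ∈ ℂ² : |w| < 1 + |z|²}`.  Then there exists an
injective holomorphic map `Φ : ℂ² → ℂ²` whose image is contained in `V`. -/
theorem exists_fatou_bieberbach_into_region :
    ∃ Φ : ℂ × ℂ → ℂ × ℂ,
      Function.Injective Φ ∧ Differentiable ℂ Φ ∧
      ∀ p : ℂ × ℂ, ‖(Φ p).2‖ < 1 + ‖(Φ p).1‖ ^ 2 := by
  refine ⟨fun p => ((FatouBieberbach.phi p).1, (FatouBieberbach.phi p).2 / 8), ?_, ?_,
    fun p => ?_⟩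
  · intro p p' h
    simp only [Prod.mk.injEq, div_left_inj' (by norm_num : (8 : ℂ) ≠ 0)] at h
    exact FatouBieberbach.phi_injective (Prod.ext h.1 h.2)
  · have := FatouBieberbach.differentiable_phi
    fun_prop
  · have h : ¬ 8 * (1 + ‖(FatouBieberbach.phi p).1‖ ^ 2) ≤ ‖(FatouBieberbach.phi p).2‖ :=
      FatouBieberbach.phi_notMem_horn p
    rw [norm_div]
    norm_num
    linarith
end

section
/- Let f and f₁ be entire functions on ℂ with no common zeros and with f₁ not identically zero, so that s = f/f₁ is a meromorphic function on ℂ. Then there exists a holomorphic function φ : ℂ² → ℂ such that the fiber-preserving holomorphic map Φ(z,w) = (z, φ(z,w)) maps ℂ² onto the complement of the graph of s; precisely, for every z ∈ ℂ the set {φ(z,w) : w ∈ ℂ} equals {v ∈ ℂ : f₁(z)·v ≠ f(z)}. -/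
/-!
It suffices to find an entire `u` for which `f₁ u - f` has no zeros. Then
`φ(z, w) = u(z) e^{f₁(z) w} - f(z) w (e^{f₁(z) w} - 1) / (f₁(z) w)` satisfies
`f₁ φ - f = (f₁ u - f) e^{f₁ w}`: for `f₁(z) ≠ 0` the right side sweeps out `ℂ \ {0}`, and for
`f₁(z) = 0` we have `φ(z, w) = u(z) - f(z) w` with `f(z) ≠ 0`.

To find `u`, take an entire `θ` with `e^θ ≡ -f` modulo `f₁`, i.e. `θ` agrees with a local
logarithm `ℓ_p` of `-f` to the order of each zero `p` of `f₁`. Such a `θ` is `f₁ G` for a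
Mittag-Leffler function `G` with the principal parts of `ℓ_p / f₁`; then `u = (e^θ + f) / f₁` is
entire and `f₁ u - f = e^θ`.
-/

open Complex Set Filter Metric Topology

noncomputable def exprel : ℂ → ℂ := dslope exp 0

theorem differentiable_exprel : Differentiable ℂ exprel :=
  differentiableOn_univ.mp <|
    (differentiableOn_dslope univ_mem).mpr differentiable_exp.differentiableOn

theorem mul_exprel (x : ℂ) : x * exprel x = exp x - 1 := by
  simpa [exprel] using sub_smul_dslope exp 0 x

theorem exprel_zero : exprel 0 = 1 := by
  simp [exprel, dslope_same]

theorem mul_sub_exprel_eq (a b u w : ℂ) :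
    a * (u * exp (a * w) - b * (w * exprel (a * w))) - b = (a * u - b) * exp (a * w) := by
  linear_combination (-b) * mul_exprel (a * w)

theorem range_mul_exp_sub_mul_exprel {a b u : ℂ} (hab : ¬(b = 0 ∧ a = 0)) (hu : a * u ≠ b) :
    range (fun w => u * exp (a * w) - b * (w * exprel (a * w))) = {v | a * v ≠ b} := by
  ext v
  rcases eq_or_ne a 0 with rfl | ha
  · have hb : b ≠ 0 := fun hb => hab ⟨hb, rfl⟩
    refine ⟨fun _ => by simpa [eq_comm] using hb, fun _ => ⟨(u - v) / b, ?_⟩⟩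
    simp only [zero_mul, exp_zero, exprel_zero]
    field_simp
    ring
  have hu' : a * u - b ≠ 0 := sub_ne_zero.mpr hu
  simp only [mem_range, mem_ofPred_eq]
  constructor
  · rintro ⟨w, rfl⟩ hv
    refine mul_ne_zero hu' (exp_ne_zero (a * w)) ?_
    rw [← mul_sub_exprel_eq, hv, sub_self]
  · intro hv
    obtain ⟨t, ht⟩ : (a * v - b) / (a * u - b) ∈ range exp := by
      rw [range_exp]; exact div_ne_zero (sub_ne_zero.mpr hv) hu'
    refine ⟨t / a, mul_left_cancel₀ ha (sub_left_inj (a := b).mp ?_)⟩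
    rw [mul_sub_exprel_eq, mul_div_cancel₀ t ha, ht, mul_div_cancel₀ _ hu']

section

variable {𝕜 E : Type*} [NontriviallyNormedField 𝕜] [NormedAddCommGroup E] [NormedSpace 𝕜 E]

theorem exists_differentiable_eqOn_compl_of_eventuallyEq_nhdsNE {D : Set 𝕜}
    (hD : Dᶜ ∈ codiscrete 𝕜) {F : 𝕜 → E} (hF : DifferentiableOn 𝕜 F Dᶜ) {g : 𝕜 → 𝕜 → E}
    (hg : ∀ p ∈ D, AnalyticAt 𝕜 (g p) p) (hFg : ∀ p ∈ D, ∀ᶠ z in 𝓝[≠] p, z ∉ D → F z = g p z) :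
    ∃ θ : 𝕜 → E, Differentiable 𝕜 θ ∧ EqOn θ F Dᶜ ∧ ∀ p ∈ D, θ =ᶠ[𝓝 p] g p := by
  classical
  have hDc : IsClosed D := (compl_mem_codiscrete_iff.mp hD).1
  have hiso (p : 𝕜) : ∀ᶠ z in 𝓝[≠] p, z ∉ D := by
    have h := disjoint_principal_right.mp (mem_codiscrete.mp hD p)
    rwa [compl_compl] at h
  set θ : 𝕜 → E := fun z => if z ∈ D then g z z else F z
  have hθF : EqOn θ F Dᶜ := fun z hz => if_neg hz
  have hθg : ∀ p ∈ D, θ =ᶠ[𝓝 p] g p := by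
    intro p hp
    rw [← nhdsNE_sup_pure, EventuallyEq, eventually_sup]
    refine ⟨?_, by simp [θ, hp]⟩
    filter_upwards [hiso p, hFg p hp] with z hz hFz
    rw [hθF hz, hFz hz]
  refine ⟨θ, fun x => ?_, hθF, hθg⟩
  by_cases hx : x ∈ D
  · exact (hg x hx).differentiableAt.congr_of_eventuallyEq (hθg x hx)
  · have hxD : Dᶜ ∈ 𝓝 x := hDc.isOpen_compl.mem_nhds hx
    exact (hF.differentiableAt hxD).congr_of_eventuallyEq (eventuallyEq_of_mem hxD hθF)

theorem exists_differentiable_analyticAt_eq_add_pow_smul {A : 𝕜 → E} {p : 𝕜}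
    (hA : AnalyticAt 𝕜 A p) (n : ℕ) :
    ∃ T B : 𝕜 → E, Differentiable 𝕜 T ∧ AnalyticAt 𝕜 B p ∧
      ∀ z, A z = T z + (z - p) ^ n • B z := by
  induction n with
  | zero => exact ⟨0, A, differentiable_const 0, hA, fun z => by simp⟩
  | succ n ih =>
    obtain ⟨T, B, hT, hB, hTB⟩ := ih
    obtain ⟨s, hs⟩ := hB
    refine ⟨fun z => T z + (z - p) ^ n • B p, dslope B p,
      hT.add (((differentiable_id.sub_const p).pow n).smul_const _),
      hs.has_fpower_series_dslope_fslope.analyticAt, fun z => ?_⟩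
    rw [hTB z, ← sub_add_cancel (B z) (B p), ← sub_smul_dslope B p z, pow_succ, mul_smul,
      smul_add, add_assoc, add_comm ((z - p) ^ n • (z - p) • dslope B p z)]

theorem exists_differentiableOn_compl_analyticAt_eq_smul {f₁ : 𝕜 → 𝕜} {ℓ : 𝕜 → E} {p : 𝕜}
    (hf₁ : AnalyticAt 𝕜 f₁ p) (hf₁p : analyticOrderAt f₁ p ≠ ⊤) (hℓ : AnalyticAt 𝕜 ℓ p) :
    ∃ P B : 𝕜 → E, DifferentiableOn 𝕜 P {p}ᶜ ∧ AnalyticAt 𝕜 B p ∧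
      ∀ᶠ z in 𝓝[≠] p, ℓ z = f₁ z • (P z + B z) := by
  obtain ⟨g, hg, hgp, hfac⟩ :=
    hf₁.analyticOrderAt_eq_natCast.mp (ENat.natCast_toNat hf₁p).symm
  set n := (analyticOrderAt f₁ p).toNat
  obtain ⟨T, B, hT, hB, hTB⟩ :=
    exists_differentiable_analyticAt_eq_add_pow_smul (A := fun z => (g z)⁻¹ • ℓ z)
      ((hg.inv hgp).smul hℓ) n
  refine ⟨fun z => ((z - p) ^ n)⁻¹ • T z, B, ?_, hB, ?_⟩
  · refine DifferentiableOn.smul (fun z hz => ?_) hT.differentiableOn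
    exact (((differentiableAt_id.sub_const p).pow n).inv
      (pow_ne_zero _ (sub_ne_zero.mpr hz))).differentiableWithinAt
  filter_upwards [hfac.filter_mono nhdsWithin_le_nhds,
    (hg.continuousAt.eventually_ne hgp).filter_mono nhdsWithin_le_nhds,
    self_mem_nhdsWithin] with z hfz hgz hz
  have hzp : (z - p) ^ n ≠ 0 := pow_ne_zero _ (sub_ne_zero.mpr hz)
  calc ℓ z = g z • ((g z)⁻¹ • ℓ z) := (smul_inv_smul₀ hgz _).symm
    _ = f₁ z • (((z - p) ^ n)⁻¹ • T z + B z) := by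
      rw [hTB z, hfz, smul_eq_mul]
      match_scalars <;> field_simp

end

theorem exists_analyticAt_exp_eq {h : ℂ → ℂ} {p : ℂ} (hh : AnalyticAt ℂ h p) (hp : h p ≠ 0) :
    ∃ ℓ : ℂ → ℂ, AnalyticAt ℂ ℓ p ∧ ∀ᶠ z in 𝓝 p, exp (ℓ z) = h z := by
  refine ⟨fun z => log (h z / h p) + log (h p), ?_, ?_⟩
  · refine ((hh.div_const).clog ?_).add analyticAt_const
    simp [div_self hp]
  filter_upwards [hh.continuousAt.eventually_ne hp] with z hz
  rw [exp_add, exp_log (div_ne_zero hz hp), exp_log hp, div_mul_cancel₀ _ hp]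

theorem finite_setOf_norm_le_of_compl_mem_codiscrete {X : Type*} [NormedAddCommGroup X]
    [ProperSpace X] {D : Set X} (hD : Dᶜ ∈ codiscrete X) (R : ℝ) :
    {p : D | ‖(p : X)‖ ≤ R}.Finite := by
  have h := (isCompact_closedBall (0 : X) R).finite_sdiff_of_mem_codiscreteWithin
    (codiscreteWithin_mono (subset_univ _) hD)
  exact (h.preimage Subtype.val_injective.injOn).subset
    fun p hp => ⟨mem_closedBall_zero_iff.mpr hp, not_not.mpr p.2⟩

section

variable {E : Type*} [NormedAddCommGroup E] [NormedSpace ℂ E] [CompleteSpace E]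

theorem exists_differentiable_dist_lt_on_ball {P : ℂ → E} {c : ℂ} {r R : ℝ}
    (hP : DifferentiableOn ℂ P (ball c R)) (hr : r < R) {ε : ℝ} (hε : 0 < ε) :
    ∃ Q : ℂ → E, Differentiable ℂ Q ∧ ∀ z ∈ ball c r, dist (P z) (Q z) < ε := by
  rcases le_or_gt r 0 with hr0 | hr0
  · exact ⟨0, differentiable_const 0, by simp [ball_eq_empty.mpr hr0]⟩
  set R' : NNReal := ⟨(r + R) / 2, by linarith⟩
  have hfps := (hP.mono (closedBall_subset_ball (show ((r + R) / 2 : ℝ) < R by linarith))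
    ).hasFPowerSeriesOnBall (R := R') (show (0 : ℝ) < (r + R) / 2 by linarith)
  set r' : NNReal := ⟨r, hr0.le⟩
  have hrR' : (r' : ENNReal) < R' := ENNReal.coe_lt_coe.mpr (show r < (r + R) / 2 by linarith)
  obtain ⟨N, hN⟩ := (Metric.tendstoUniformlyOn_iff.mp (hfps.tendstoUniformlyOn' hrR') ε hε).exists
  refine ⟨fun z => (cauchyPowerSeries P c R').partialSum N (z - c), ?_, hN⟩
  simp only [FormalMultilinearSeries.partialSum, FormalMultilinearSeries.apply_eq_pow_smul_coeff]
  fun_prop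

theorem exists_differentiable_norm_sub_le_on_ball_half_norm {P : ℂ → E} {p : ℂ}
    (hP : DifferentiableOn ℂ P {p}ᶜ) {ε : ℝ} (hε : 0 < ε) :
    ∃ Q : ℂ → E, Differentiable ℂ Q ∧ ∀ z ∈ ball (0 : ℂ) (‖p‖ / 2), ‖P z - Q z‖ ≤ ε := by
  rcases eq_or_ne p 0 with rfl | hp
  · exact ⟨0, differentiable_const 0, by simp⟩
  have hball : ball (0 : ℂ) ‖p‖ ⊆ {p}ᶜ := fun z hz (h : z = p) => by simp [h] at hz
  obtain ⟨Q, hQ, hPQ⟩ := exists_differentiable_dist_lt_on_ball (hP.mono hball)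
    (half_lt_self (norm_pos_iff.mpr hp)) hε
  exact ⟨Q, hQ, fun z hz => by rw [← dist_eq_norm]; exact (hPQ z hz).le⟩

theorem differentiableOn_tsum_sub_sum {ι : Type*} {a : ι → ℂ}
    (ha : ∀ R, {i | ‖a i‖ ≤ R}.Finite) {τ : ι → ℂ → E} {w : ι → ℝ} (hw : Summable w)
    (hτ : ∀ i, DifferentiableOn ℂ (τ i) {a i}ᶜ)
    (hτw : ∀ i, ∀ z ∈ ball (0 : ℂ) (‖a i‖ / 2), ‖τ i z‖ ≤ w i) (R : ℝ) :
    DifferentiableOn ℂ (fun z => ∑' i, τ i z - ∑ i ∈ (ha (2 * R)).toFinset, τ i z)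
      (ball 0 R) := by
  set s := (ha (2 * R)).toFinset
  have hball (i : ι) (hi : i ∉ s) : ball (0 : ℂ) R ⊆ ball 0 (‖a i‖ / 2) := by
    simp only [s, Finite.mem_toFinset, mem_ofPred_eq, not_le] at hi
    exact ball_subset_ball (by linarith)
  have hpole (i : ι) : ball (0 : ℂ) (‖a i‖ / 2) ⊆ {a i}ᶜ := fun z hz (h : z = a i) => by
    simp only [h, mem_ball_zero_iff] at hz
    linarith [norm_nonneg (a i)]
  have htail : DifferentiableOn ℂ (fun z => ∑' i : ↥(↑s : Set ι)ᶜ, τ i z) (ball 0 R) :=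
    differentiableOn_tsum_of_summable_norm (hw.subtype _)
      (fun i => (hτ i).mono ((hball i i.2).trans (hpole i))) isOpen_ball
      fun i z hz => hτw i z (hball i i.2 hz)
  refine htail.congr fun z hz => ?_
  have hsum : Summable fun i => τ i z := hw.of_norm_bounded_eventually <|
    s.finite_toSet.subset fun i hi => by_contra fun his => hi (hτw i z (hball i his hz))
  rw [← hsum.sum_add_tsum_compl, add_sub_cancel_left]

theorem exists_differentiableOn_compl_analyticAt_sub {D : Set ℂ} (hD : Dᶜ ∈ codiscrete ℂ)
    {P : ℂ → ℂ → E} (hP : ∀ p ∈ D, DifferentiableOn ℂ (P p) {p}ᶜ) :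
    ∃ G : ℂ → E, DifferentiableOn ℂ G Dᶜ ∧ ∀ p ∈ D, AnalyticAt ℂ (fun z => G z - P p z) p := by
  have hfin := finite_setOf_norm_le_of_compl_mem_codiscrete hD
  have : Countable D := ((HereditarilyLindelofSpace.isLindelof D).countable_of_isDiscrete
    (compl_mem_codiscrete_iff.mp hD).2).to_subtype
  obtain ⟨c, hc⟩ := exists_injective_nat D
  have hw : Summable fun p : D => (1 / 2 : ℝ) ^ c p := summable_geometric_two.comp_injective hc
  -- Runge-type correction: subtracting an entire approximation of each principal part on a disc
  -- growing with `‖p‖` makes the sum of principal parts converge.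
  choose Q hQ hPQ using fun p : D => exists_differentiable_norm_sub_le_on_ball_half_norm
    (hP p p.2) (by positivity : (0 : ℝ) < (1 / 2) ^ c p)
  set τ : D → ℂ → E := fun p z => P p z - Q p z
  have hτ (p : D) : DifferentiableOn ℂ (τ p) {(p : ℂ)}ᶜ := (hP p p.2).sub (hQ p).differentiableOn
  have htail := differentiableOn_tsum_sub_sum hfin hw hτ hPQ
  have hτsum (s : Finset D) (z : ℂ) (hz : ∀ p ∈ s, z ≠ p) :
      DifferentiableAt ℂ (fun z => ∑ p ∈ s, τ p z) z :=
    DifferentiableAt.fun_sum fun p hp =>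
      (hτ p).differentiableAt (isOpen_compl_singleton.mem_nhds (hz p hp))
  refine ⟨fun z => ∑' p, τ p z, fun x hx => ?_, fun q hq => ?_⟩
  · have hR := (htail (‖x‖ + 1)).differentiableAt
      (isOpen_ball.mem_nhds (show x ∈ ball 0 (‖x‖ + 1) by simp))
    have hsum := hτsum (hfin (2 * (‖x‖ + 1))).toFinset x fun p _ h => hx (h ▸ p.2)
    simpa using (hR.fun_add hsum).differentiableWithinAt (s := Dᶜ)
  set R := ‖q‖ + 1
  set s := (hfin (2 * R)).toFinset
  set q' : D := ⟨q, hq⟩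
  have hq' : q' ∈ s := by
    simp only [s, Finite.mem_toFinset, mem_ofPred_eq, q', R]
    linarith [norm_nonneg q]
  have hG : (fun z => ∑' p, τ p z - P q z) = fun z =>
      (∑' p, τ p z - ∑ p ∈ s, τ p z) + ∑ p ∈ s.erase q', τ p z - Q q' z := by
    funext z
    rw [← Finset.add_sum_erase _ _ hq']
    simp only [τ, q']
    abel
  rw [hG, analyticAt_iff_eventually_differentiableAt]
  filter_upwards [isOpen_ball.mem_nhds (show q ∈ ball (0 : ℂ) R by simp [R]),
    show ∀ᶠ z in 𝓝 q, ∀ p ∈ s.erase q', z ≠ (p : ℂ) from (eventually_all_finset _).mpr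
      fun p hp => isOpen_compl_singleton.mem_nhds
        fun (h : q = p) => Finset.ne_of_mem_erase hp (Subtype.ext h.symm)] with z hzR hzp
  exact (((htail R).differentiableAt (isOpen_ball.mem_nhds hzR)).add (hτsum _ z hzp)).sub
    (hQ q').differentiableAt

end

theorem exists_differentiable_exp_eq_neg_mul_exp_mul {f f₁ : ℂ → ℂ} (hf : Differentiable ℂ f)
    (hf₁ : Differentiable ℂ f₁) (hcz : ∀ z, ¬(f z = 0 ∧ f₁ z = 0)) (hne : ∃ z, f₁ z ≠ 0) :
    ∃ θ : ℂ → ℂ, Differentiable ℂ θ ∧ ∀ p, f₁ p = 0 →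
      ∃ r : ℂ → ℂ, AnalyticAt ℂ r p ∧ ∀ᶠ z in 𝓝 p, exp (θ z) = -f z * exp (f₁ z * r z) := by
  obtain ⟨z₀, hz₀⟩ := hne
  set D := f₁ ⁻¹' {0}
  have hD : Dᶜ ∈ codiscrete ℂ :=
    AnalyticOnNhd.preimage_zero_mem_codiscrete (fun z _ => hf₁.analyticAt z) hz₀
  have hf₁ord (p : ℂ) : analyticOrderAt f₁ p ≠ ⊤ := fun h => hz₀ <| congrFun
    ((AnalyticOnNhd.analyticOrderAt_eq_top_iff_eq_zero p fun z => hf₁.analyticAt z).mp h) z₀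
  have hlocal (p : ℂ) (hp : p ∈ D) : ∃ ℓ P B : ℂ → ℂ, AnalyticAt ℂ ℓ p ∧
      (∀ᶠ z in 𝓝 p, exp (ℓ z) = -f z) ∧ DifferentiableOn ℂ P {p}ᶜ ∧ AnalyticAt ℂ B p ∧
      ∀ᶠ z in 𝓝[≠] p, ℓ z = f₁ z * (P z + B z) := by
    obtain ⟨ℓ, hℓ, hexp⟩ :=
      exists_analyticAt_exp_eq (hf.analyticAt p).neg (neg_ne_zero.mpr fun h => hcz p ⟨h, hp⟩)
    obtain ⟨P, B, hP, hB, hPB⟩ :=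
      exists_differentiableOn_compl_analyticAt_eq_smul (hf₁.analyticAt p) (hf₁ord p) hℓ
    exact ⟨ℓ, P, B, hℓ, hexp, hP, hB, hPB⟩
  choose! ℓ P B hℓ hexp hP hB hPB using hlocal
  obtain ⟨G, hG, hGP⟩ := exists_differentiableOn_compl_analyticAt_sub hD hP
  set r : ℂ → ℂ → ℂ := fun p z => G z - P p z - B p z
  have hr (p : ℂ) (hp : p ∈ D) : AnalyticAt ℂ (r p) p := (hGP p hp).sub (hB p hp)
  obtain ⟨θ, hθ, -, hθℓ⟩ := exists_differentiable_eqOn_compl_of_eventuallyEq_nhdsNE hD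
    (F := fun z => f₁ z * G z) (hf₁.differentiableOn.mul hG)
    (g := fun p z => ℓ p z + f₁ z * r p z)
    (fun p hp => (hℓ p hp).add ((hf₁.analyticAt p).mul (hr p hp)))
    fun p hp => by
      filter_upwards [hPB p hp] with z hz _
      simp only [r, hz]
      ring
  refine ⟨θ, hθ, fun p hp => ⟨r p, hr p hp, ?_⟩⟩
  filter_upwards [hθℓ p hp, hexp p hp] with z hθz hexpz
  rw [hθz, exp_add, hexpz]

theorem exists_differentiable_mul_eq_exp_add {f f₁ θ : ℂ → ℂ} (hf : Differentiable ℂ f)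
    (hf₁ : Differentiable ℂ f₁) (hθ : Differentiable ℂ θ) (hne : ∃ z, f₁ z ≠ 0)
    (hθf : ∀ p, f₁ p = 0 →
      ∃ r : ℂ → ℂ, AnalyticAt ℂ r p ∧ ∀ᶠ z in 𝓝 p, exp (θ z) = -f z * exp (f₁ z * r z)) :
    ∃ u : ℂ → ℂ, Differentiable ℂ u ∧ ∀ z, f₁ z * u z = exp (θ z) + f z := by
  obtain ⟨z₀, hz₀⟩ := hne
  choose! r hr hθr using hθf
  obtain ⟨u, hu, hθu, -⟩ := exists_differentiable_eqOn_compl_of_eventuallyEq_nhdsNE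
    (D := f₁ ⁻¹' {0}) (AnalyticOnNhd.preimage_zero_mem_codiscrete (fun z _ => hf₁.analyticAt z) hz₀)
    (F := fun z => (exp (θ z) + f z) / f₁ z)
    (fun z hz => ((hθ.cexp.add hf z).div (hf₁ z) hz).differentiableWithinAt)
    (g := fun p z => -(f z * r p z * exprel (f₁ z * r p z)))
    (fun p hp => (((hf.analyticAt p).mul (hr p hp)).mul
      ((differentiable_exprel.analyticAt _).comp ((hf₁.analyticAt p).mul (hr p hp)))).neg)
    fun p hp => by
      filter_upwards [(hθr p hp).filter_mono nhdsWithin_le_nhds] with z hθz hz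
      rw [div_eq_iff hz, hθz]
      linear_combination f z * mul_exprel (f₁ z * r p z)
  refine ⟨u, hu, fun z => ?_⟩
  by_cases hz : f₁ z = 0
  · rw [(hθr z hz).self_of_nhds, hz]
    simp
  · rw [hθu hz, mul_div_cancel₀ _ hz]

/-- Let `f` and `f₁` be entire functions with no common zeros and
with `f₁` not identically zero, so that `s = f / f₁` is a meromorphic function on `ℂ`.
Then there exists a holomorphic function `φ : ℂ² → ℂ` such that the fiber-preserving
holomorphic map `Φ(z, w) = (z, φ(z, w))` maps `ℂ²` onto the complement of the graph of
`s`: for every `z ∈ ℂ` the set `{φ(z, w) : w ∈ ℂ}` equals `{v : f₁(z)·v ≠ f(z)}`. -/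
theorem exists_dominating_map_onto_complement_of_graph
    (f f₁ : ℂ → ℂ) (hf : Differentiable ℂ f) (hf₁ : Differentiable ℂ f₁)
    (hcz : ∀ z : ℂ, ¬(f z = 0 ∧ f₁ z = 0))
    (hne : ∃ z : ℂ, f₁ z ≠ 0) :
    ∃ φ : ℂ × ℂ → ℂ,
      Differentiable ℂ φ ∧
      ∀ z : ℂ, (Set.range fun w : ℂ => φ (z, w)) = {v : ℂ | f₁ z * v ≠ f z} := by
  obtain ⟨θ, hθ, hθf⟩ := exists_differentiable_exp_eq_neg_mul_exp_mul hf hf₁ hcz hne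
  obtain ⟨u, hu, hfu⟩ := exists_differentiable_mul_eq_exp_add hf hf₁ hθ hne hθf
  refine ⟨fun q => u q.1 * exp (f₁ q.1 * q.2) - f q.1 * (q.2 * exprel (f₁ q.1 * q.2)), ?_,
    fun z => range_mul_exp_sub_mul_exprel (hcz z) (by simp [hfu z] : f₁ z * u z ≠ f z)⟩
  have := differentiable_exprel
  fun_prop
end

section
/- There exists an entire function ψ : ℂ² → ℂ satisfying ψ(t,w) = (exp(tw) − 1)/t for all t ≠ 0 and ψ(0,w) = w for all w ∈ ℂ; moreover, for every t ∈ ℂ the range of the map w ↦ ψ(t,w) is exactly {v ∈ ℂ : 1 + t·v ≠ 0}. In particular, for t ≠ 0 the map w ↦ ψ(t,w) maps ℂ onto ℂ \ {−1/t}, and the fiber-preserving map (t,w) ↦ (t, ψ(t,w)) maps ℂ² onto the complement of the graph of the meromorphic function t ↦ −1/t. -/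
/-! Writing `E = dslope exp 0` for the entire function `z ↦ (exp z - 1) / z` (with `E 0 = 1`),
take `ψ (t, w) = w * E (t * w)`. Then `1 + t * ψ (t, w) = exp (t * w)` holds identically, which
never vanishes, and for `t ≠ 0` every `v` with `1 + t * v ≠ 0` is attained at
`w = log (1 + t * v) / t`; for `t = 0` the map `w ↦ ψ (0, w)` is the identity. -/

open Complex

noncomputable def expDiffQuot (p : ℂ × ℂ) : ℂ :=
  p.2 * dslope exp 0 (p.1 * p.2)

theorem differentiable_dslope_exp : Differentiable ℂ (dslope exp 0) :=
  differentiableOn_univ.1 <|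
    (Complex.differentiableOn_dslope Filter.univ_mem).2 differentiable_exp.differentiableOn

theorem differentiable_expDiffQuot : Differentiable ℂ expDiffQuot :=
  differentiable_snd.mul <|
    differentiable_dslope_exp.comp (differentiable_fst.mul differentiable_snd)

theorem mul_expDiffQuot (t w : ℂ) : t * expDiffQuot (t, w) = exp (t * w) - 1 := by
  simpa [expDiffQuot, mul_left_comm, mul_assoc] using sub_smul_dslope exp 0 (t * w)

theorem expDiffQuot_of_ne_zero {t : ℂ} (w : ℂ) (ht : t ≠ 0) :
    expDiffQuot (t, w) = (exp (t * w) - 1) / t :=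
  eq_div_of_mul_eq ht <| by rw [mul_comm, mul_expDiffQuot]

theorem expDiffQuot_zero_left (w : ℂ) : expDiffQuot (0, w) = w := by
  simp [expDiffQuot, dslope_same]

theorem range_expDiffQuot (t : ℂ) :
    Set.range (fun w => expDiffQuot (t, w)) = {v | 1 + t * v ≠ 0} := by
  rcases eq_or_ne t 0 with rfl | ht
  · simp [expDiffQuot_zero_left, Set.range_id']
  ext v
  constructor
  · rintro ⟨w, rfl⟩
    simp [mul_expDiffQuot]
  · intro hv
    refine ⟨log (1 + t * v) / t, mul_left_cancel₀ ht ?_⟩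
    rw [mul_expDiffQuot, mul_div_cancel₀ _ ht, exp_log hv, add_sub_cancel_left]

/-- There exists an entire function `ψ : ℂ² → ℂ` satisfying
`ψ(t, w) = (exp(tw) − 1)/t` for `t ≠ 0` and `ψ(0, w) = w`; moreover, for every `t ∈ ℂ`
the range of `w ↦ ψ(t, w)` is exactly `{v : 1 + t·v ≠ 0}`.  In particular, for `t ≠ 0`
the map `w ↦ ψ(t, w)` maps `ℂ` onto `ℂ \ {−1/t}`, and `(t, w) ↦ (t, ψ(t, w))` maps
`ℂ²` onto the complement of the graph of the meromorphic function `t ↦ −1/t`. -/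
theorem exists_entire_exp_difference_quotient :
    ∃ ψ : ℂ × ℂ → ℂ,
      Differentiable ℂ ψ ∧
      (∀ t w : ℂ, t ≠ 0 → ψ (t, w) = (Complex.exp (t * w) - 1) / t) ∧
      (∀ w : ℂ, ψ (0, w) = w) ∧
      ∀ t : ℂ, (Set.range fun w : ℂ => ψ (t, w)) = {v : ℂ | 1 + t * v ≠ 0} :=
  ⟨expDiffQuot, differentiable_expDiffQuot, fun _ w ht => expDiffQuot_of_ne_zero w ht,
    expDiffQuot_zero_left, range_expDiffQuot⟩
end
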